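/- arXiv:1506.04380 — 8 statements merged into one kernel-verified Lean document; each statement's English description precedes it below -/
import Mathlib

section
/- For every sequence of positive integers d_1, ..., d_n and every positive integer q, there exists a bipartite graph with colour classes {v_1,...,v_n} and {w_1,...,w_q}, having at most n+q-1 edges, together with a labelling of its edges by positive integers, such that for each i the labels of edges incident to v_i sum to d_i, and for any two distinct vertices w_i and w_j the sums of labels of edges incident to w_i and to w_j differ by at most 1. -/
private lemma overlap_symm (a b c e : ℕ) (hab : a ≤ b) (hce : c ≤ e) :
    min b (max a e) - min b (max a c) = min e (max c b) - min e (max c a) := by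
  omega

private lemma div_add_bounds (x y k : ℕ) (hk : 0 < k) :
    x / k + y / k ≤ (x + y) / k ∧ (x + y) / k ≤ x / k + y / k + 1 := by
  constructor
  · rw [Nat.le_div_iff_mul_le hk, Nat.add_mul]
    have h1 : x / k * k ≤ x := Nat.div_mul_le_self x k
    have h2 : y / k * k ≤ y := Nat.div_mul_le_self y k
    omega
  · have h3 : (x + y) / k < x / k + y / k + 2 := by
      apply Nat.div_lt_of_lt_mul
      have hx := Nat.div_add_mod x k
      have hy := Nat.div_add_mod y k
      have hx' : x % k < k := Nat.mod_lt _ hk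
      have hy' : y % k < k := Nat.mod_lt _ hk
      have hr : k * (x / k + y / k + 2) = k * (x / k) + k * (y / k) + 2 * k := by ring
      omega
    omega

/-- **Load-balancing bipartite graphs.**  For every sequence `d 0, …, d (n-1)` of
positive integers and every positive `q`, there is a bipartite graph between
`Fin n` (the `v`-side) and `Fin q` (the `w`-side), given by its edge set
`E ⊆ Fin n × Fin q` with at most `n + q - 1` edges, and a positive labelling of
the edges, such that the labels at each `v i` sum to `d i` and the label sums at
any two distinct `w j`, `w j'` differ by at most `1`. -/
theorem load_balance (n q : ℕ) (hn : 0 < n) (hq : 0 < q)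
    (d : Fin n → ℕ) (hd : ∀ i, 0 < d i) :
    ∃ (E : Finset (Fin n × Fin q)) (l : Fin n × Fin q → ℕ),
      E.card ≤ n + q - 1 ∧
      (∀ e ∈ E, 0 < l e) ∧
      (∀ i : Fin n, ∑ e ∈ E.filter (fun e => e.1 = i), l e = d i) ∧
      (∀ j j' : Fin q, j ≠ j' →
        ((∑ e ∈ E.filter (fun e => e.2 = j), l e : ℤ) -
          (∑ e ∈ E.filter (fun e => e.2 = j'), l e : ℤ)).natAbs ≤ 1) := by
  classical
  set D : ℕ := ∑ i, d i with hD
  set dd : ℕ → ℕ := fun k => if h : k < n then d ⟨k, h⟩ else 0 with hdd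
  set A : ℕ → ℕ := fun k => ∑ i ∈ Finset.range k, dd i with hA
  set B : ℕ → ℕ := fun j => j * D / q with hB
  have hddval : ∀ i : Fin n, dd i.val = d i := fun i => by
    simp [hdd, i.isLt]
  have hAmono : Monotone A := fun x y hxy =>
    Finset.sum_le_sum_of_subset (Finset.range_subset_range.2 hxy)
  have hAsucc : ∀ k, A (k + 1) = A k + dd k := fun k => Finset.sum_range_succ dd k
  have hAn : A n = D := by
    rw [hA, hD]
    simp only []
    rw [← Fin.sum_univ_eq_sum_range dd n]
    exact Finset.sum_congr rfl fun i _ => hddval i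
  have hA0 : A 0 = 0 := by simp [hA]
  have hBmono : Monotone B := fun x y hxy =>
    Nat.div_le_div_right (Nat.mul_le_mul_right D hxy)
  have hB0 : B 0 = 0 := by simp [hB]
  have hBq : B q = D := by
    simp only [hB]
    exact Nat.mul_div_cancel_left D hq
  set l : Fin n × Fin q → ℕ := fun e =>
    min (A e.1.val + dd e.1.val) (max (A e.1.val) (B (e.2.val + 1))) -
      min (A e.1.val + dd e.1.val) (max (A e.1.val) (B e.2.val)) with hl
  set E : Finset (Fin n × Fin q) := Finset.univ.filter (fun e => 0 < l e) with hE
  -- bounds for edges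
  have hedge : ∀ e ∈ E, A e.1.val < B (e.2.val + 1) ∧ B e.2.val < A e.1.val + dd e.1.val := by
    intro e he
    have h1 : 0 < l e := (Finset.mem_filter.1 he).2
    rw [hl] at h1
    simp only [] at h1
    omega
  refine ⟨E, l, ?_, ?_, ?_, ?_⟩
  · -- card bound
    have hinj : Set.InjOn (fun e : Fin n × Fin q => e.1.val + e.2.val) E := by
      intro e he e' he' heq
      simp only [] at heq
      by_contra hne
      obtain ⟨h1, h2⟩ := hedge e he
      obtain ⟨h1', h2'⟩ := hedge e' he'
      have hi : e.1.val ≠ e'.1.val := by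
        intro hiv
        exact hne (Prod.ext (Fin.ext hiv) (Fin.ext (by omega)))
      rcases Nat.lt_or_ge e.1.val e'.1.val with hlt | hge
      · have hj : e'.2.val < e.2.val := by omega
        have c1 : A (e.1.val + 1) ≤ A e'.1.val := hAmono (by omega)
        have c2 : B (e'.2.val + 1) ≤ B e.2.val := hBmono (by omega)
        have c3 := hAsucc e.1.val
        omega
      · have hlt' : e'.1.val < e.1.val := by omega
        have hj : e.2.val < e'.2.val := by omega
        have c1 : A (e'.1.val + 1) ≤ A e.1.val := hAmono (by omega)
        have c2 : B (e.2.val + 1) ≤ B e'.2.val := hBmono (by omega)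
        have c3 := hAsucc e'.1.val
        omega
    calc E.card = (E.image (fun e : Fin n × Fin q => e.1.val + e.2.val)).card :=
          (Finset.card_image_of_injOn hinj).symm
      _ ≤ (Finset.range (n + q - 1)).card := by
          apply Finset.card_le_card
          intro x hx
          obtain ⟨e, he, rfl⟩ := Finset.mem_image.1 hx
          have := e.1.isLt; have := e.2.isLt
          exact Finset.mem_range.2 (by omega)
      _ = n + q - 1 := Finset.card_range _
  · exact fun e he => (Finset.mem_filter.1 he).2
  · -- v-sums
    intro i
    have hsub : E.filter (fun e => e.1 = i) ⊆ Finset.univ.filter (fun e : Fin n × Fin q => e.1 = i) := by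
      intro e he
      simp only [Finset.mem_filter] at he ⊢
      exact ⟨Finset.mem_univ _, he.2⟩
    rw [Finset.sum_subset hsub (by
      intro e he hne
      simp only [hE, Finset.mem_filter, Finset.mem_univ, true_and] at he hne
      push_neg at hne
      omega)]
    have step1 : ∑ e ∈ Finset.univ.filter (fun e : Fin n × Fin q => e.1 = i), l e
        = ∑ j : Fin q, l (i, j) := by
      rw [Finset.sum_filter, Fintype.sum_prod_type]
      rw [Finset.sum_eq_single i]
      · simp
      · intro b _ hb
        simp [hb]
      · simp
    rw [step1]
    have step2 : ∑ j : Fin q, l (i, j)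
        = ∑ j ∈ Finset.range q,
            (min (A i.val + dd i.val) (max (A i.val) (B (j + 1))) -
              min (A i.val + dd i.val) (max (A i.val) (B j))) := by
      rw [← Fin.sum_univ_eq_sum_range
        (fun j => min (A i.val + dd i.val) (max (A i.val) (B (j + 1))) -
          min (A i.val + dd i.val) (max (A i.val) (B j))) q]
    rw [step2]
    have hmono : Monotone (fun x => min (A i.val + dd i.val) (max (A i.val) (B x))) := by
      intro x y hxy
      have := hBmono hxy
      simp only []
      omega
    rw [Finset.sum_range_tsub hmono]
    have h1 : A i.val + dd i.val ≤ D := by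
      have := hAmono (show i.val + 1 ≤ n from i.isLt)
      rw [hAn] at this
      have := hAsucc i.val
      omega
    rw [hB0, hBq, hddval i]
    have := hddval i
    omega
  · -- w-sums
    have wsum : ∀ j : Fin q, ∑ e ∈ E.filter (fun e => e.2 = j), l e
        = B (j.val + 1) - B j.val := by
      intro j
      have hsub : E.filter (fun e => e.2 = j) ⊆ Finset.univ.filter (fun e : Fin n × Fin q => e.2 = j) := by
        intro e he
        simp only [Finset.mem_filter] at he ⊢
        exact ⟨Finset.mem_univ _, he.2⟩
      rw [Finset.sum_subset hsub (by
        intro e he hne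
        simp only [hE, Finset.mem_filter, Finset.mem_univ, true_and] at he hne
        push_neg at hne
        omega)]
      have step1 : ∑ e ∈ Finset.univ.filter (fun e : Fin n × Fin q => e.2 = j), l e
          = ∑ i : Fin n, l (i, j) := by
        rw [Finset.sum_filter, Fintype.sum_prod_type]
        apply Finset.sum_congr rfl
        intro i _
        rw [Finset.sum_eq_single j]
        · simp
        · intro b _ hb
          simp [hb]
        · simp
      rw [step1]
      have hswap : ∀ i : Fin n, l (i, j)
          = min (B (j.val + 1)) (max (B j.val) (A (i.val + 1))) -
              min (B (j.val + 1)) (max (B j.val) (A i.val)) := by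
        intro i
        rw [hl]
        simp only []
        rw [hAsucc i.val]
        exact overlap_symm (A i.val) (A i.val + dd i.val) (B j.val) (B (j.val + 1))
          (by omega) (hBmono (by omega))
      rw [Finset.sum_congr rfl (fun i _ => hswap i)]
      have step2 : ∑ i : Fin n,
          (min (B (j.val + 1)) (max (B j.val) (A (i.val + 1))) -
            min (B (j.val + 1)) (max (B j.val) (A i.val)))
          = ∑ i ∈ Finset.range n,
            (min (B (j.val + 1)) (max (B j.val) (A (i + 1))) -
              min (B (j.val + 1)) (max (B j.val) (A i))) := by
        rw [← Fin.sum_univ_eq_sum_range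
          (fun i => min (B (j.val + 1)) (max (B j.val) (A (i + 1))) -
            min (B (j.val + 1)) (max (B j.val) (A i))) n]
      rw [step2]
      have hmono : Monotone (fun x => min (B (j.val + 1)) (max (B j.val) (A x))) := by
        intro x y hxy
        have := hAmono hxy
        simp only []
        omega
      rw [Finset.sum_range_tsub hmono]
      have hb1 : B (j.val + 1) ≤ D := by
        have := hBmono (show j.val + 1 ≤ q from j.isLt)
        rw [hBq] at this
        exact this
      have hb2 : B j.val ≤ B (j.val + 1) := hBmono (by omega)
      rw [hA0, hAn]
      omega
    intro j j' _
    rw [← Nat.cast_sum, ← Nat.cast_sum, wsum j, wsum j']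
    have bound : ∀ k : ℕ, k < q → D / q ≤ B (k + 1) - B k ∧ B (k + 1) - B k ≤ D / q + 1 := by
      intro k hk
      have h := div_add_bounds (k * D) D q hq
      have heq : k * D + D = (k + 1) * D := by ring
      rw [heq] at h
      have hmono := hBmono (by omega : k ≤ k + 1)
      simp only [hB] at hmono ⊢
      omega
    have b1 := bound j.val j.isLt
    have b2 := bound j'.val j'.isLt
    omega
end

section
/- Let 1/2 < ε < 1 and let q, r be positive integers with q ≥ r/(1-ε). Then every ε-separator of the q × r grid graph has size at least r. -/
/-- `S` is an `ε`-separator of `G`: every connected component of `G − S`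
has at most `ε·|V(G)|` vertices. -/
def IsSeparator {V : Type} [Fintype V] (G : SimpleGraph V) (ε : ℝ) (S : Set V) : Prop :=
  ∀ C : (G.induce Sᶜ).ConnectedComponent, (C.supp.ncard : ℝ) ≤ ε * Fintype.card V

/-- The `q × r` grid graph on vertex set `Fin q × Fin r`. -/
def grid2 (q r : ℕ) : SimpleGraph (Fin q × Fin r) :=
  SimpleGraph.fromRel (fun a b =>
    (a.1 = b.1 ∧ a.2.val + 1 = b.2.val) ∨ (a.2 = b.2 ∧ a.1.val + 1 = b.1.val))

lemma grid2_adj_vert {q r : ℕ} (x : Fin q) {y y' : Fin r} (h : (y : ℕ) + 1 = y') :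
    (grid2 q r).Adj (x, y) (x, y') := by
  rw [grid2, SimpleGraph.fromRel_adj]
  refine ⟨?_, Or.inl (Or.inl ⟨rfl, h⟩)⟩
  intro he
  have : (y : ℕ) = y' := congrArg (fun p => ((p.2 : Fin r) : ℕ)) he
  omega

lemma grid2_adj_horiz {q r : ℕ} {x x' : Fin q} (y : Fin r) (h : (x : ℕ) + 1 = x') :
    (grid2 q r).Adj (x, y) (x', y) := by
  rw [grid2, SimpleGraph.fromRel_adj]
  refine ⟨?_, Or.inl (Or.inr ⟨rfl, h⟩)⟩
  intro he
  have : (x : ℕ) = x' := congrArg (fun p => ((p.1 : Fin q) : ℕ)) he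
  omega

lemma col_reach {q r : ℕ} {S : Set (Fin q × Fin r)} (hr : 0 < r) (x : Fin q)
    (hcol : ∀ y, (x, y) ∈ Sᶜ) (y y' : Fin r) :
    ((grid2 q r).induce Sᶜ).Reachable ⟨(x, y), hcol y⟩ ⟨(x, y'), hcol y'⟩ := by
  suffices h : ∀ n (hn : n < r),
      ((grid2 q r).induce Sᶜ).Reachable ⟨(x, ⟨n, hn⟩), hcol _⟩ ⟨(x, ⟨0, hr⟩), hcol _⟩ by
    exact (h y y.isLt).trans (h y' y'.isLt).symm
  intro n
  induction n with
  | zero => intro _; exact SimpleGraph.Reachable.refl _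
  | succ n ih =>
      intro hn
      have hn' : n < r := by omega
      have hadj : ((grid2 q r).induce Sᶜ).Adj ⟨(x, ⟨n, hn'⟩), hcol _⟩ ⟨(x, ⟨n + 1, hn⟩), hcol _⟩ :=
        grid2_adj_vert x rfl
      exact hadj.symm.reachable.trans (ih hn')

lemma row_reach {q r : ℕ} {S : Set (Fin q × Fin r)} (hq : 0 < q) (y : Fin r)
    (hrow : ∀ x, (x, y) ∈ Sᶜ) (x x' : Fin q) :
    ((grid2 q r).induce Sᶜ).Reachable ⟨(x, y), hrow x⟩ ⟨(x', y), hrow x'⟩ := by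
  suffices h : ∀ n (hn : n < q),
      ((grid2 q r).induce Sᶜ).Reachable ⟨(⟨n, hn⟩, y), hrow _⟩ ⟨(⟨0, hq⟩, y), hrow _⟩ by
    exact (h x x.isLt).trans (h x' x'.isLt).symm
  intro n
  induction n with
  | zero => intro _; exact SimpleGraph.Reachable.refl _
  | succ n ih =>
      intro hn
      have hn' : n < q := by omega
      have hadj : ((grid2 q r).induce Sᶜ).Adj ⟨(⟨n, hn'⟩, y), hrow _⟩ ⟨(⟨n + 1, hn⟩, y), hrow _⟩ :=
        grid2_adj_horiz y rfl
      exact hadj.symm.reachable.trans (ih hn')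

lemma ncard_prod_univ {q r : ℕ} (s : Set (Fin q)) :
    (s ×ˢ (Set.univ : Set (Fin r))).ncard = s.ncard * r :=
  calc (s ×ˢ (Set.univ : Set (Fin r))).ncard
      = Nat.card ↥(s ×ˢ (Set.univ : Set (Fin r))) := (Nat.card_coe_set_eq _).symm
    _ = Nat.card (↥s × ↥(Set.univ : Set (Fin r))) := Nat.card_congr (Equiv.Set.prod _ _)
    _ = Nat.card ↥s * Nat.card ↥(Set.univ : Set (Fin r)) := Nat.card_prod _ _
    _ = s.ncard * r := by
        rw [Nat.card_coe_set_eq, Nat.card_coe_set_eq, Set.ncard_univ,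
          Nat.card_eq_fintype_card, Fintype.card_fin]

/-- Every `ε`-separator of the `q × r` grid graph, for `1/2 < ε < 1` and
`q ≥ r/(1-ε)`, has size at least `r`. -/
theorem grid2_separator (ε : ℝ) (hε : 1/2 < ε) (hε1 : ε < 1)
    (q r : ℕ) (hq : 0 < q) (hr : 0 < r) (hqr : (r : ℝ) / (1 - ε) ≤ q)
    (S : Set (Fin q × Fin r)) (hS : IsSeparator (grid2 q r) ε S) :
    (r : ℝ) ≤ S.ncard := by
  by_contra hlt
  push_neg at hlt
  have hsn : S.ncard < r := by exact_mod_cast hlt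
  -- there is a row `y₀` disjoint from `S`
  obtain ⟨y₀, hy₀⟩ : ∃ y₀ : Fin r, y₀ ∉ Prod.snd '' S := by
    by_contra hc
    push_neg at hc
    have huniv : Prod.snd '' S = Set.univ := Set.eq_univ_of_forall hc
    have h1 : (Prod.snd '' S).ncard ≤ S.ncard := Set.ncard_image_le (Set.toFinite S)
    rw [huniv, Set.ncard_univ, Nat.card_eq_fintype_card, Fintype.card_fin] at h1
    omega
  have hrow : ∀ x, (x, y₀) ∈ Sᶜ := by
    intro x hx
    exact hy₀ ⟨(x, y₀), hx, rfl⟩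
  -- the set of columns disjoint from `S`
  set F : Set (Fin q) := {x | ∀ y, (x, y) ∈ Sᶜ} with hF
  have hFc : Fᶜ ⊆ Prod.fst '' S := by
    intro x hx
    simp only [hF, Set.mem_compl_iff, Set.mem_setOf_eq] at hx
    push_neg at hx
    obtain ⟨y, hy⟩ := hx
    exact ⟨(x, y), by simpa using hy, rfl⟩
  have hFcard : q ≤ F.ncard + S.ncard := by
    have h1 : Fᶜ.ncard ≤ (Prod.fst '' S).ncard := Set.ncard_le_ncard hFc (Set.toFinite _)
    have h2 : (Prod.fst '' S).ncard ≤ S.ncard := Set.ncard_image_le (Set.toFinite S)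
    have h3 : F.ncard + Fᶜ.ncard = q := by
      rw [Set.ncard_add_ncard_compl, Nat.card_eq_fintype_card, Fintype.card_fin]
    omega
  -- the big connected component
  set G' := (grid2 q r).induce Sᶜ with hG'
  set base : ↥Sᶜ := ⟨(⟨0, hq⟩, y₀), hrow _⟩ with hbase
  set C := G'.connectedComponentMk base with hC
  have hsub : F ×ˢ (Set.univ : Set (Fin r)) ⊆ Subtype.val '' C.supp := by
    rintro ⟨x, y⟩ ⟨hx, -⟩
    have hmem : (x, y) ∈ Sᶜ := hx y
    refine ⟨⟨(x, y), hmem⟩, ?_, rfl⟩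
    rw [SimpleGraph.ConnectedComponent.mem_supp_iff, hC]
    apply SimpleGraph.ConnectedComponent.sound
    exact (col_reach hr x hx y y₀).trans (row_reach hq y₀ hrow x ⟨0, hq⟩)
  have hcount : F.ncard * r ≤ C.supp.ncard := by
    have h1 : (F ×ˢ (Set.univ : Set (Fin r))).ncard ≤ (Subtype.val '' C.supp).ncard :=
      Set.ncard_le_ncard hsub (Set.toFinite _)
    rwa [ncard_prod_univ, Set.ncard_image_of_injective _ Subtype.val_injective] at h1
  -- real arithmetic contradiction
  have hSep := hS C
  rw [Fintype.card_prod, Fintype.card_fin, Fintype.card_fin] at hSep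
  have hε0 : (0 : ℝ) < 1 - ε := by linarith
  have hD : (r : ℝ) ≤ (1 - ε) * q := by
    rw [div_le_iff₀ hε0] at hqr
    linarith [hqr]
  have hr0 : (0 : ℝ) < r := by exact_mod_cast hr
  have hA : (F.ncard : ℝ) * r ≤ ε * (q * r) := by
    refine le_trans ?_ (by exact_mod_cast hSep)
    exact_mod_cast hcount
  have hB : (q : ℝ) ≤ (F.ncard : ℝ) + S.ncard := by exact_mod_cast hFcard
  have hCc : (S.ncard : ℝ) + 1 ≤ r := by exact_mod_cast hsn
  have h1 : ((q : ℝ) - r + 1) * r ≤ (F.ncard : ℝ) * r := by nlinarith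
  have h2 : ε * (q * r) ≤ ((q : ℝ) - r) * r := by nlinarith
  nlinarith
end

section
/- Let 1/2 < ε < 1 and let p ≥ q ≥ r/(1-ε) be positive integers with p ≥ q. Then every ε-separator of the p × q × r grid graph has size at least ((1-ε)/(1+ε))·q·r. -/
/-- The `p × q × r` grid graph on vertex set `Fin p × Fin q × Fin r`. -/
def grid3 (p q r : ℕ) : SimpleGraph (Fin p × Fin q × Fin r) :=
  SimpleGraph.fromRel (fun a b =>
    (a.2 = b.2 ∧ a.1.val + 1 = b.1.val) ∨
    (a.1 = b.1 ∧ a.2.2 = b.2.2 ∧ a.2.1.val + 1 = b.2.1.val) ∨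
    (a.1 = b.1 ∧ a.2.1 = b.2.1 ∧ a.2.2.val + 1 = b.2.2.val))

/-!
Let `T` be the separator and call the line `{(t, j, k) | t}` a pillar; at least `qr - |T|`
pillars miss `T`. Pick a plane `{(i, j, k) | j, k}` meeting `T` in the fewest vertices, say `m`,
so that `qm ≤ pm ≤ |T|`. If `m ≥ r` then `|T| ≥ qr`. Otherwise the plane has a row and a column
missing `T` (as `m < r ≤ q`), and every vertex of the plane lying on such a row or column is in
the component of their crossing. Free pillars through these vertices lie in that component, so
there are at most `εqr` of them; the other free pillars pass through one of the at most `m²`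
cells whose row and column both meet `T`. Hence `qr ≤ |T| + εqr + m²`, and together with
`qm ≤ |T|` and `r ≤ (1 - ε)q` this forces `(1 + ε)|T| ≥ (1 - ε)qr` because `ε > 1/3`.
-/

open Finset SimpleGraph

section ReachableOutside

variable {V : Type*} {G : SimpleGraph V} {S : Set V}

variable (G S) in
def ReachableOutside (v w : V) : Prop :=
  ∃ (hv : v ∉ S) (hw : w ∉ S), (G.induce Sᶜ).Reachable ⟨v, hv⟩ ⟨w, hw⟩

theorem ReachableOutside.trans {u v w : V} (h₁ : ReachableOutside G S u v)
    (h₂ : ReachableOutside G S v w) : ReachableOutside G S u w :=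
  let ⟨hu, _, h₁⟩ := h₁
  let ⟨_, hw, h₂⟩ := h₂
  ⟨hu, hw, h₁.trans h₂⟩

theorem reachableOutside_of_path {n : ℕ} (f : Fin n → V)
    (hadj : ∀ a b : Fin n, a.val + 1 = b.val → G.Adj (f a) (f b)) (hf : ∀ a, f a ∉ S)
    (a b : Fin n) : ReachableOutside G S (f a) (f b) := by
  let φ : pathGraph n →g G.induce Sᶜ :=
    { toFun := fun a => ⟨f a, hf a⟩
      map_rel' := fun {a b} hab => by
        rcases pathGraph_adj.1 hab with h | h
        · exact hadj a b h
        · exact (hadj b a h).symm }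
  exact ⟨hf a, hf b, (pathGraph_preconnected n a b).map φ⟩

theorem IsSeparator.card_le {V : Type} [Fintype V] {G : SimpleGraph V} {S : Set V} {ε : ℝ}
    (hS : IsSeparator G ε S) {w : V} (hw : w ∉ S) (A : Finset V)
    (hA : ∀ v ∈ A, ReachableOutside G S v w) : (#A : ℝ) ≤ ε * Fintype.card V := by
  let C := (G.induce Sᶜ).connectedComponentMk ⟨w, hw⟩
  have hsub : (A : Set V) ⊆ Subtype.val '' C.supp := fun v hv =>
    let ⟨hv', _, h⟩ := hA v hv
    ⟨⟨v, hv'⟩, ConnectedComponent.sound h, rfl⟩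
  calc (#A : ℝ) = (A : Set V).ncard := by rw [Set.ncard_coe_finset]
    _ ≤ (Subtype.val '' C.supp).ncard := by exact_mod_cast Set.ncard_le_ncard hsub
    _ = C.supp.ncard := by rw [Set.ncard_image_of_injective _ Subtype.val_injective]
    _ ≤ _ := hS C

end ReachableOutside

theorem one_sub_div_one_add_mul_mul_le {ε q r s x : ℝ} (hε : 1 / 2 < ε) (hε1 : ε < 1)
    (hr : 0 ≤ r) (hrq : r ≤ (1 - ε) * q) (hx : 0 ≤ x) (hqx : q * x ≤ s)
    (h : q * r ≤ s + ε * q * r + x ^ 2) : (1 - ε) / (1 + ε) * q * r ≤ s := by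
  rw [div_mul_eq_mul_div, div_mul_eq_mul_div, div_le_iff₀ (by linarith)]
  by_contra! hlt
  have hq : 0 ≤ q := by nlinarith
  have hs : 0 ≤ s := (mul_nonneg hq hx).trans hqx
  have hqr : 0 < q * r := by nlinarith
  have hsq : q ^ 2 * ((1 - ε) * q * r - s) ≤ s ^ 2 := by
    calc q ^ 2 * ((1 - ε) * q * r - s) ≤ q ^ 2 * x ^ 2 := by gcongr; linarith
      _ = (q * x) ^ 2 := by ring
      _ ≤ s ^ 2 := by gcongr
  have hsq_lt : ((1 + ε) * s) ^ 2 < ((1 - ε) * q * r) ^ 2 :=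
    pow_lt_pow_left₀ (by linarith) (by positivity) two_ne_zero
  have hcube : (1 + ε) * ε * q ^ 2 * (q * r) < (1 - ε) * (q * r) ^ 2 := by
    have : (1 - ε) * ((1 + ε) * ε * q ^ 2 * (q * r)) < (1 - ε) * ((1 - ε) * (q * r) ^ 2) := by
      nlinarith [mul_le_mul_of_nonneg_left hsq (sq_nonneg (1 + ε)),
        mul_le_mul_of_nonneg_left hlt.le (sq_nonneg q)]
    exact lt_of_mul_lt_mul_left this (by linarith)
  have hlin : (1 + ε) * ε * q < (1 - ε) * r := by
    have : (1 + ε) * ε * q * (q * (q * r)) < (1 - ε) * r * (q * (q * r)) := by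
      linear_combination hcube
    exact lt_of_mul_lt_mul_right this (by positivity)
  nlinarith [mul_le_mul_of_nonneg_left hrq (by linarith : (0 : ℝ) ≤ 1 - ε)]

namespace Grid3

variable {p q r : ℕ}

theorem adj_fst {i i' : Fin p} (j : Fin q) (k : Fin r) (h : i.val + 1 = i'.val) :
    (grid3 p q r).Adj (i, j, k) (i', j, k) :=
  (fromRel_adj ..).2
    ⟨by simp only [ne_eq, Prod.mk.injEq, Fin.ext_iff]; omega, .inl (.inl ⟨rfl, h⟩)⟩

theorem adj_snd (i : Fin p) {j j' : Fin q} (k : Fin r) (h : j.val + 1 = j'.val) :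
    (grid3 p q r).Adj (i, j, k) (i, j', k) :=
  (fromRel_adj ..).2
    ⟨by simp only [ne_eq, Prod.mk.injEq, Fin.ext_iff]; omega, .inl (.inr (.inl ⟨rfl, rfl, h⟩))⟩

theorem adj_thd (i : Fin p) (j : Fin q) {k k' : Fin r} (h : k.val + 1 = k'.val) :
    (grid3 p q r).Adj (i, j, k) (i, j, k') :=
  (fromRel_adj ..).2
    ⟨by simp only [ne_eq, Prod.mk.injEq, Fin.ext_iff]; omega, .inl (.inr (.inr ⟨rfl, rfl, h⟩))⟩

section Lines

variable {S : Set (Fin p × Fin q × Fin r)}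

theorem reachableOutside_fst {j : Fin q} {k : Fin r} (hS : ∀ t, (t, j, k) ∉ S) (i i' : Fin p) :
    ReachableOutside (grid3 p q r) S (i, j, k) (i', j, k) :=
  reachableOutside_of_path (fun t => (t, j, k)) (fun _ _ => adj_fst j k) hS i i'

theorem reachableOutside_snd {i : Fin p} {k : Fin r} (hS : ∀ t, (i, t, k) ∉ S) (j j' : Fin q) :
    ReachableOutside (grid3 p q r) S (i, j, k) (i, j', k) :=
  reachableOutside_of_path (fun t => (i, t, k)) (fun _ _ => adj_snd i k) hS j j'

theorem reachableOutside_thd {i : Fin p} {j : Fin q} (hS : ∀ t, (i, j, t) ∉ S) (k k' : Fin r) :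
    ReachableOutside (grid3 p q r) S (i, j, k) (i, j, k') :=
  reachableOutside_of_path (fun t => (i, j, t)) (fun _ _ => adj_thd i j) hS k k'

end Lines

def slice (T : Finset (Fin p × Fin q × Fin r)) (i : Fin p) : Finset (Fin q × Fin r) :=
  (T.filter (·.1 = i)).image Prod.snd

variable {T : Finset (Fin p × Fin q × Fin r)}

theorem mem_slice {i : Fin p} {c : Fin q × Fin r} : c ∈ slice T i ↔ (i, c) ∈ T := by
  simp [slice]

theorem sum_card_slice (T : Finset (Fin p × Fin q × Fin r)) : ∑ i, #(slice T i) = #T := by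
  rw [card_eq_sum_card_fiberwise (f := Prod.fst) (t := univ) fun _ _ => mem_univ _]
  refine sum_congr rfl fun i _ => card_image_of_injOn ?_
  intro a ha b hb hab
  simp only [coe_filter, Set.mem_ofPred_eq] at ha hb
  exact Prod.ext (ha.2.trans hb.2.symm) hab

/-- The hub is the crossing of a row and a column of the plane that both miss `T`. -/
theorem exists_hub_of_card_slice_lt {i : Fin p} (hi : #(slice T i) < r) (hrq : r ≤ q) :
    ∃ w ∉ (T : Set _), ∀ c : Fin q × Fin r,
      c.1 ∉ (slice T i).image Prod.fst ∨ c.2 ∉ (slice T i).image Prod.snd →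
      ReachableOutside (grid3 p q r) T (i, c) w := by
  obtain ⟨j₀, -, hj₀⟩ := exists_mem_notMem_of_card_lt_card
    (s := (slice T i).image Prod.fst) (t := univ)
    (by simpa using card_image_le.trans_lt (hi.trans_le hrq))
  obtain ⟨k₀, -, hk₀⟩ := exists_mem_notMem_of_card_lt_card
    (s := (slice T i).image Prod.snd) (t := univ) (by simpa using card_image_le.trans_lt hi)
  have col {j} (hj : j ∉ (slice T i).image Prod.fst) (k) : (i, j, k) ∉ (T : Set _) :=
    fun hk => hj (mem_image.2 ⟨(j, k), mem_slice.2 hk, rfl⟩)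
  have row {k} (hk : k ∉ (slice T i).image Prod.snd) (j) : (i, j, k) ∉ (T : Set _) :=
    fun hj => hk (mem_image.2 ⟨(j, k), mem_slice.2 hj, rfl⟩)
  refine ⟨(i, j₀, k₀), col hj₀ k₀, ?_⟩
  rintro ⟨j, k⟩ (hj | hk)
  · exact (reachableOutside_thd (col hj) k k₀).trans (reachableOutside_snd (row hk₀) j j₀)
  · exact (reachableOutside_snd (row hk) j j₀).trans (reachableOutside_thd (col hj₀) k k₀)

theorem card_le_of_card_slice_lt {ε : ℝ} (hS : IsSeparator (grid3 p q r) ε T) {i : Fin p}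
    (hi : #(slice T i) < r) (hrq : r ≤ q) :
    (q * r : ℝ) ≤ #T + ε * q * r + #(slice T i) ^ 2 := by
  obtain ⟨w, hw, hreach⟩ := exists_hub_of_card_slice_lt hi hrq
  set free := (T.image Prod.snd)ᶜ
  set blocked := (slice T i).image Prod.fst ×ˢ (slice T i).image Prod.snd
  have hfree : q * r ≤ #free + #T := by
    have := card_image_le (s := T) (f := Prod.snd)
    rw [card_compl]; simp only [Fintype.card_prod, Fintype.card_fin]; omega
  have hblocked : #blocked ≤ #(slice T i) ^ 2 := by
    rw [card_product, sq]; exact Nat.mul_le_mul card_image_le card_image_le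
  have hreached : (p : ℝ) * #(free \ blocked) ≤ p * (ε * q * r) := by
    have := hS.card_le hw (univ ×ˢ (free \ blocked)) ?_
    · simpa [card_product, mul_assoc, mul_left_comm] using this
    rintro ⟨t, c⟩ htc
    simp only [mem_product, mem_univ, mem_sdiff, true_and, blocked, not_and_or] at htc
    have hpillar (t' : Fin p) : (t', c) ∉ (T : Set _) :=
      fun h => mem_compl.1 htc.1 (mem_image_of_mem _ h)
    exact (reachableOutside_fst hpillar t i).trans (hreach c htc.2)
  have hsplit : #free ≤ #(free \ blocked) + #blocked := card_le_card_sdiff_add_card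
  have hp : (0 : ℝ) < p := by exact_mod_cast i.pos
  have : (q * r : ℝ) ≤ #(free \ blocked) + #blocked + #T := by
    exact_mod_cast hfree.trans (by omega)
  have : (#blocked : ℝ) ≤ #(slice T i) ^ 2 := by exact_mod_cast hblocked
  linarith [le_of_mul_le_mul_left hreached hp]

end Grid3

open Grid3 in
theorem grid3_separator_general (ε : ℝ) (hε : 1/2 < ε) (hε1 : ε < 1)
    (p q r : ℕ) (hqp : q ≤ p) (hqr : (r : ℝ) / (1 - ε) ≤ q)
    (S : Set (Fin p × Fin q × Fin r)) (hS : IsSeparator (grid3 p q r) ε S) :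
    (1 - ε) / (1 + ε) * q * r ≤ (S.ncard : ℝ) := by
  obtain ⟨T, rfl⟩ := S.toFinite.exists_finset_coe
  rw [Set.ncard_coe_finset]
  have hrq : (r : ℝ) ≤ (1 - ε) * q := by rwa [div_le_iff₀ (by linarith), mul_comm] at hqr
  rcases p.eq_zero_or_pos with rfl | hp
  · simp [show q = 0 by omega]
  have : Nonempty (Fin p) := ⟨⟨0, hp⟩⟩
  obtain ⟨i, hmin⟩ := Finite.exists_min fun i => #(slice T i)
  have hqi : q * #(slice T i) ≤ #T := calc
    q * #(slice T i) ≤ p * #(slice T i) := Nat.mul_le_mul_right _ hqp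
    _ ≤ ∑ i', #(slice T i') := by simpa using card_nsmul_le_sum univ _ _ fun j _ => hmin j
    _ = #T := sum_card_slice T
  rcases lt_or_ge #(slice T i) r with hsparse | hdense
  · have hrq' : (r : ℝ) ≤ q := hrq.trans (by nlinarith)
    exact one_sub_div_one_add_mul_mul_le hε hε1 (Nat.cast_nonneg r) hrq (Nat.cast_nonneg _)
      (by exact_mod_cast hqi) (card_le_of_card_slice_lt hS hsparse (by exact_mod_cast hrq'))
  · calc (1 - ε) / (1 + ε) * q * r ≤ 1 * q * r := by
          gcongr; rw [div_le_one (by linarith)]; linarith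
      _ ≤ q * #(slice T i) := by norm_cast; simpa using Nat.mul_le_mul_left q hdense
      _ ≤ #T := by exact_mod_cast hqi

/-- Every `ε`-separator of the `p × q × r` grid graph, for `1/2 < ε < 1` and
`p ≥ q ≥ r/(1-ε)`, has size at least `((1-ε)/(1+ε))·q·r`. -/
theorem grid3_separator (ε : ℝ) (hε : 1/2 < ε) (hε1 : ε < 1)
    (p q r : ℕ) (hr : 0 < r) (hqp : q ≤ p) (hqr : (r : ℝ) / (1 - ε) ≤ q)
    (S : Set (Fin p × Fin q × Fin r)) (hS : IsSeparator (grid3 p q r) ε S) :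
    (1 - ε) / (1 + ε) * q * r ≤ (S.ncard : ℝ) :=
  grid3_separator_general ε hε hε1 p q r hqp hqr S hS
end

section
/- Every n-vertex graph with layered treewidth at most k has treewidth at most 2√(kn) − 1. -/
def IsTreeDecomp {V ι : Type} (G : SimpleGraph V) (T : SimpleGraph ι) (B : ι → Finset V) : Prop :=
  T.IsTree ∧
  (∀ ⦃v w⦄, G.Adj v w → ∃ x, v ∈ B x ∧ w ∈ B x) ∧
  (∀ v : V, (T.induce {x | v ∈ B x}).Connected)

noncomputable def treewidth {V : Type} (G : SimpleGraph V) : ℕ :=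
  sInf {k | ∃ (ι : Type) (T : SimpleGraph ι) (B : ι → Finset V),
    IsTreeDecomp G T B ∧ ∀ x, (B x).card ≤ k + 1}

def IsLayering {V : Type} (G : SimpleGraph V) (L : V → ℕ) : Prop :=
  ∀ ⦃v w⦄, G.Adj v w → L v ≤ L w + 1 ∧ L w ≤ L v + 1

noncomputable def layeredTreewidth {V : Type} (G : SimpleGraph V) : ℕ :=
  sInf {k | ∃ (ι : Type) (T : SimpleGraph ι) (B : ι → Finset V) (L : V → ℕ),
    IsTreeDecomp G T B ∧ IsLayering G L ∧
    ∀ x i, ((B x).filter (fun v => L v = i)).card ≤ k}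

open Finset SimpleGraph

/-!
Take a tree-decomposition of layered width `k` with layering `L`, and `ℓ ≈ √(n/k)`. Some residue
class of layers modulo `ℓ` holds at most `n/ℓ` vertices; call them `S`. Every edge of `G - S` stays
inside one strip of `ℓ - 1` consecutive layers strictly between two layers of `S`, so the bags
restricted to a strip have at most `(ℓ - 1) k` vertices. One copy of the decomposition tree per
strip, all joined to a hub with bag `S`, and `S` added to every bag, is a tree-decomposition of `G`
with bags of size at most `n/ℓ + (ℓ - 1) k ≤ 2√(kn)`.
-/

namespace SimpleGraph

variable {α β ι : Type*}

lemma isBridge_of_separating_map {H : SimpleGraph α} {H' : SimpleGraph β} (f : α → β) {a b : α}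
    (hf : ∀ ⦃u v⦄, H.Adj u v → s(u, v) ≠ s(a, b) → H'.Reachable (f u) (f v))
    (hab : ¬ H'.Reachable (f a) (f b)) : H.IsBridge s(a, b) := by
  rw [isBridge_iff, reachable_iff_reflTransGen]
  refine fun h => hab ((reachable_iff_reflTransGen _ _).mpr (h.lift' f fun u v huv => ?_))
  rw [deleteEdges_adj, Set.mem_singleton_iff] at huv
  exact (reachable_iff_reflTransGen _ _).mp (hf huv.1 huv.2)

lemma Connected.induce_image {G : SimpleGraph α} {H : SimpleGraph β} (φ : G →g H) {s : Set α}
    (hs : (G.induce s).Connected) : (H.induce (φ '' s)).Connected :=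
  hs.map (induceHom φ (Set.mapsTo_image φ s)) <| by
    rintro ⟨_, x, hx, rfl⟩
    exact ⟨⟨x, hx⟩, rfl⟩

def copiesWithHub (T : SimpleGraph ι) (x₀ : ι) (κ : Type*) : SimpleGraph (Option (ι × κ)) where
  Adj
    | some (x, c), some (y, d) => c = d ∧ T.Adj x y
    | some (x, _), none => x = x₀
    | none, some (y, _) => y = x₀
    | none, none => False
  symm := ⟨by rintro (_ | ⟨x, c⟩) (_ | ⟨y, d⟩) h <;> simp_all [T.adj_comm]⟩
  loopless := ⟨by rintro (_ | ⟨x, c⟩) h <;> simp_all⟩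

variable {κ : Type*} {T : SimpleGraph ι} {x₀ : ι}

@[simp] lemma copiesWithHub_adj_some_some {x y : ι} {c d : κ} :
    (copiesWithHub T x₀ κ).Adj (some (x, c)) (some (y, d)) ↔ c = d ∧ T.Adj x y := .rfl

@[simp] lemma copiesWithHub_adj_some_none {x : ι} {c : κ} :
    (copiesWithHub T x₀ κ).Adj (some (x, c)) none ↔ x = x₀ := .rfl

@[simp] lemma copiesWithHub_adj_none_some {y : ι} {d : κ} :
    (copiesWithHub T x₀ κ).Adj none (some (y, d)) ↔ y = x₀ := .rfl

@[simps]
def copiesWithHub.copy (c : κ) : T →g copiesWithHub T x₀ κ where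
  toFun x := some (x, c)
  map_rel' h := ⟨rfl, h⟩

lemma copiesWithHub_connected (hT : T.Connected) : (copiesWithHub T x₀ κ).Connected := by
  refine (connected_iff_exists_forall_reachable _).mpr ⟨none, ?_⟩
  rintro (_ | ⟨x, c⟩)
  · rfl
  · exact (Adj.reachable (by simp) : (copiesWithHub T x₀ κ).Reachable none (some (x₀, c))).trans
      ((hT x₀ x).map (copiesWithHub.copy c))

lemma copiesWithHub_isAcyclic (hT : T.IsAcyclic) : (copiesWithHub T x₀ κ).IsAcyclic := by
  have hub (c : κ) : (copiesWithHub T x₀ κ).IsBridge s(some (x₀, c), none) := by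
    refine isBridge_of_separating_map (H' := ⊥) (fun a => a.map Prod.snd = some c) ?_ (by simp)
    rintro (_ | ⟨x, d⟩) (_ | ⟨y, e⟩) h hne <;> simp_all
  refine isAcyclic_iff_forall_adj_isBridge.mpr ?_
  rintro (_ | ⟨x, c⟩) (_ | ⟨y, d⟩) h
  · exact absurd h id
  · simp only [copiesWithHub_adj_none_some] at h
    rw [Sym2.eq_swap, h]
    exact hub d
  · simp only [copiesWithHub_adj_some_none] at h
    rw [h]
    exact hub c
  · obtain ⟨rfl, hxy⟩ := h
    classical
    -- retract onto copy `c`, collapsing the hub and the other copies to `x₀`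
    refine isBridge_of_separating_map (H' := T.deleteEdges {s(x, y)})
      (fun a => a.elim x₀ fun p => if p.2 = c then p.1 else x₀) ?_
      (by simpa [isBridge_iff] using isAcyclic_iff_forall_adj_isBridge.mp hT hxy)
    rintro (_ | ⟨z, d⟩) (_ | ⟨w, e⟩) h hne
    · exact absurd h id
    · simp_all
    · simp_all
    · obtain ⟨rfl, hzw⟩ := h
      dsimp only [Option.elim]
      split_ifs with hd
      · subst hd
        refine Adj.reachable ((deleteEdges_adj ..).mpr ⟨hzw, fun he => hne ?_⟩)
        rw [Set.mem_singleton_iff] at he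
        simpa using congrArg (Sym2.map fun z => some (z, d)) he
      · rfl

end SimpleGraph

lemma div_eq_div_of_not_dvd {ℓ i j : ℕ} (hij : i ≤ j + 1 ∧ j ≤ i + 1) (hi : ¬ ℓ ∣ i)
    (hj : ¬ ℓ ∣ j) : i / ℓ = j / ℓ := by
  obtain rfl | rfl | rfl : j = i + 1 ∨ j = i ∨ i = j + 1 := by omega
  · exact (Nat.succ_div_of_not_dvd hj).symm
  · rfl
  · exact Nat.succ_div_of_not_dvd hi

lemma mem_Ioo_of_not_dvd {ℓ i : ℕ} (hℓ : 0 < ℓ) (hi : ¬ ℓ ∣ i) :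
    i ∈ Ioo (ℓ * (i / ℓ)) (ℓ * (i / ℓ) + ℓ) := by
  have := Nat.div_add_mod i ℓ
  have := Nat.mod_lt i hℓ
  have := mt Nat.dvd_of_mod_eq_zero hi
  rw [mem_Ioo]
  omega

lemma card_filter_not_dvd_div_eq_le {V : Type*} {s : Finset V} {M : V → ℕ} {ℓ k : ℕ} (hℓ : 0 < ℓ)
    (hk : ∀ i, #{v ∈ s | M v = i} ≤ k) (c : ℕ) :
    #{v ∈ s | ¬ ℓ ∣ M v ∧ M v / ℓ = c} ≤ (ℓ - 1) * k := by
  calc _ ≤ k * #(Ioo (ℓ * c) (ℓ * c + ℓ)) := by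
        refine card_le_mul_card_image_of_maps_to (f := M) (fun v hv => ?_) k fun i _ => ?_
        · obtain ⟨-, hdvd, rfl⟩ := mem_filter.mp hv
          exact mem_Ioo_of_not_dvd hℓ hdvd
        · refine (card_le_card fun v hv => ?_).trans (hk i)
          simp only [mem_filter] at hv ⊢
          exact ⟨hv.1.1, hv.2⟩
    _ = (ℓ - 1) * k := by rw [Nat.card_Ioo, mul_comm]; congr 1; omega

lemma exists_pred_sq_mul_le_and_le_sq_mul {k n : ℕ} (hk : 0 < k) (hn : 0 < n) :
    ∃ ℓ, 0 < ℓ ∧ (ℓ - 1) ^ 2 * k ≤ n ∧ n ≤ ℓ ^ 2 * k := by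
  classical
  have hex : ∃ ℓ, n ≤ ℓ ^ 2 * k := ⟨n, by nlinarith⟩
  have hpos : 0 < Nat.find hex := Nat.pos_of_ne_zero fun h0 => by
    have := Nat.find_spec hex
    rw [h0] at this
    omega
  refine ⟨Nat.find hex, hpos, ?_, Nat.find_spec hex⟩
  exact (not_le.mp (Nat.find_min hex (by omega : Nat.find hex - 1 < Nat.find hex))).le

lemma natCast_add_pred_mul_le_two_mul_sqrt {a ℓ k n : ℕ} (hℓ : 0 < ℓ) (ha : ℓ * a ≤ n)
    (hlo : (ℓ - 1) ^ 2 * k ≤ n) (hhi : n ≤ ℓ ^ 2 * k) :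
    ((a + (ℓ - 1) * k : ℕ) : ℝ) ≤ 2 * √(k * n) := by
  have le_sqrt {b : ℕ} (hb : b ^ 2 ≤ k * n) : (b : ℝ) ≤ √(k * n) := by
    exact_mod_cast (Nat.cast_le.mpr (Nat.le_sqrt'.mpr hb)).trans Real.nat_sqrt_le_real_sqrt
  have hS : a ^ 2 ≤ k * n := by
    refine Nat.le_of_mul_le_mul_left ?_ (pow_pos hℓ 2)
    calc ℓ ^ 2 * a ^ 2 = (ℓ * a) ^ 2 := by ring
      _ ≤ n * n := by rw [sq]; exact Nat.mul_le_mul ha ha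
      _ ≤ ℓ ^ 2 * (k * n) := by nlinarith
  have hstrips : ((ℓ - 1) * k) ^ 2 ≤ k * n := by
    calc ((ℓ - 1) * k) ^ 2 = k * ((ℓ - 1) ^ 2 * k) := by ring
      _ ≤ k * n := Nat.mul_le_mul_left k hlo
  rw [Nat.cast_add]
  linarith [le_sqrt hS, le_sqrt hstrips]

section TreeDecomp

variable {V ι κ : Type} {G : SimpleGraph V} {T : SimpleGraph ι} {B : ι → Finset V}

lemma IsTreeDecomp.treewidth_add_one_le [Nonempty V] (hB : IsTreeDecomp G T B) {m : ℕ}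
    (hm : ∀ x, #(B x) ≤ m) : treewidth G + 1 ≤ m := by
  obtain ⟨v⟩ := ‹Nonempty V›
  obtain ⟨⟨x, hx⟩⟩ := (hB.2.2 v).nonempty
  have hm0 : 0 < m := (card_pos.mpr ⟨v, hx⟩).trans_le (hm x)
  have : treewidth G ≤ m - 1 := Nat.sInf_le ⟨ι, T, B, hB, fun x => (hm x).trans (by omega)⟩
  omega

def splitBags [DecidableEq V] [DecidableEq κ] (B : ι → Finset V) (S : Finset V) (f : V → κ) :
    Option (ι × κ) → Finset V
  | none => S
  | some (x, c) => S ∪ {v ∈ B x | v ∉ S ∧ f v = c}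

lemma IsTreeDecomp.split [DecidableEq V] [DecidableEq κ] (hB : IsTreeDecomp G T B) (x₀ : ι)
    (S : Finset V) (f : V → κ) (hf : ∀ ⦃v w⦄, G.Adj v w → v ∉ S → w ∉ S → f v = f w) :
    IsTreeDecomp G (copiesWithHub T x₀ κ) (splitBags B S f) := by
  refine ⟨⟨copiesWithHub_connected hB.1.connected, copiesWithHub_isAcyclic hB.1.isAcyclic⟩,
    fun v w hvw => ?_, fun v => ?_⟩
  · obtain ⟨x, hv, hw⟩ := hB.2.1 hvw
    by_cases hvS : v ∈ S <;> by_cases hwS : w ∈ S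
    · exact ⟨none, hvS, hwS⟩
    · exact ⟨some (x, f w), by simp [splitBags, *]⟩
    · exact ⟨some (x, f v), by simp [splitBags, *]⟩
    · exact ⟨some (x, f v), by simp [splitBags, *, hf hvw hvS hwS]⟩
  · by_cases hv : v ∈ S
    · have : {a | v ∈ splitBags B S f a} = Set.univ := by
        ext (_ | ⟨x, c⟩) <;> simp [splitBags, hv]
      rw [this]
      exact (induceUnivIso _).connected_iff.mpr (copiesWithHub_connected hB.1.connected)
    · have : {a | v ∈ splitBags B S f a} =
          copiesWithHub.copy (T := T) (x₀ := x₀) (f v) '' {x | v ∈ B x} := by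
        ext (_ | ⟨x, c⟩) <;> simp [splitBags, hv, eq_comm]
      rw [this]
      exact (hB.2.2 v).induce_image _

end TreeDecomp

section Layered

variable {V ι : Type} {G : SimpleGraph V} {T : SimpleGraph ι} {B : ι → Finset V} {L : V → ℕ}
  {k : ℕ}

def IsLayeredDecomp (G : SimpleGraph V) (T : SimpleGraph ι) (B : ι → Finset V) (L : V → ℕ)
    (k : ℕ) : Prop :=
  IsTreeDecomp G T B ∧ IsLayering G L ∧ ∀ x i, #{v ∈ B x | L v = i} ≤ k

lemma exists_isLayeredDecomp_of_layeredTreewidth_le [Fintype V] (h : layeredTreewidth G ≤ k) :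
    ∃ (ι : Type) (T : SimpleGraph ι) (B : ι → Finset V) (L : V → ℕ), IsLayeredDecomp G T B L k := by
  have htrivial : IsLayeredDecomp G (⊥ : SimpleGraph Unit) (fun _ => univ) (fun _ => 0)
      (Fintype.card V) :=
    ⟨⟨.of_subsingleton, fun v w _ => ⟨(), mem_univ v, mem_univ w⟩,
      fun v => have : Nonempty {x : Unit | v ∈ univ} := ⟨⟨(), mem_univ v⟩⟩; .of_subsingleton⟩,
      fun _ _ _ => by simp, fun _ _ => card_filter_le _ _⟩
  obtain ⟨ι, T, B, L, hB, hL, hwidth⟩ :=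
    Nat.sInf_mem (s := {k | ∃ (ι : Type) (T : SimpleGraph ι) (B : ι → Finset V) (L : V → ℕ),
      IsLayeredDecomp G T B L k}) ⟨_, _, _, _, _, htrivial⟩
  exact ⟨ι, T, B, L, hB, hL, fun x i => (hwidth x i).trans h⟩

lemma IsLayeredDecomp.width_pos [Nonempty V] (hD : IsLayeredDecomp G T B L k) : 0 < k := by
  obtain ⟨v⟩ := ‹Nonempty V›
  obtain ⟨⟨x, hx⟩⟩ := (hD.1.2.2 v).nonempty
  have hv : v ∈ {u ∈ B x | L u = L v} := mem_filter.mpr ⟨hx, rfl⟩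
  exact (card_pos.mpr ⟨v, hv⟩).trans_le (hD.2.2 x (L v))

lemma IsLayeredDecomp.add_const (hD : IsLayeredDecomp G T B L k) (s : ℕ) :
    IsLayeredDecomp G T B (fun v => L v + s) k := by
  refine ⟨hD.1, fun v w hvw => ?_,
    fun x i => (card_le_card fun v hv => ?_).trans (hD.2.2 x (i - s))⟩
  · have := hD.2.1 hvw
    dsimp only
    omega
  · obtain ⟨hvx, hvi⟩ := mem_filter.mp hv
    dsimp only at hvi
    exact mem_filter.mpr ⟨hvx, by omega⟩

lemma exists_mul_card_dvd_add_le [Fintype V] (L : V → ℕ) {ℓ : ℕ} (hℓ : 0 < ℓ) :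
    ∃ s, ℓ * #{v | ℓ ∣ L v + s} ≤ Fintype.card V := by
  have : NeZero ℓ := ⟨hℓ.ne'⟩
  obtain ⟨r, hr⟩ := Fintype.exists_card_fiber_le_of_card_le_nsmul (fun v => (L v : ZMod ℓ))
    (b := (Fintype.card V / ℓ : ℚ)) (by rw [ZMod.card, nsmul_eq_mul]; field_simp; rfl)
  refine ⟨(-r).val, ?_⟩
  have hfiber : ({v | ℓ ∣ L v + (-r).val} : Finset V) = ({v | (L v : ZMod ℓ) = r} : Finset V) := by
    ext v
    simp [← ZMod.natCast_eq_zero_iff, add_neg_eq_zero]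
  rw [hfiber]
  rw [le_div_iff₀ (by exact_mod_cast hℓ)] at hr
  exact_mod_cast (mul_comm _ _).le.trans hr

lemma IsLayeredDecomp.treewidth_add_one_le [Fintype V] [Nonempty V] [DecidableEq V]
    (hD : IsLayeredDecomp G T B L k) {ℓ : ℕ} (hℓ : 0 < ℓ) :
    treewidth G + 1 ≤ #{v | ℓ ∣ L v} + (ℓ - 1) * k := by
  obtain ⟨x₀⟩ := hD.1.1.connected.nonempty
  set S : Finset V := {v | ℓ ∣ L v}
  have hS (v : V) : v ∉ S ↔ ¬ ℓ ∣ L v := by simp [S]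
  have hsplit := hD.1.split x₀ S (fun v => L v / ℓ) fun v w hvw hv hw =>
    div_eq_div_of_not_dvd (hD.2.1 hvw) ((hS v).mp hv) ((hS w).mp hw)
  refine hsplit.treewidth_add_one_le fun
    | none => le_add_right le_rfl
    | some (x, c) => (card_union_le _ _).trans (Nat.add_le_add_left ?_ _)
  simp only [hS]
  exact card_filter_not_dvd_div_eq_le hℓ (hD.2.2 x) c

end Layered

/-- Every `n`-vertex graph with layered treewidth at most `k` has treewidth at
most `2√(kn) − 1`. -/
theorem treewidth_le_of_layeredTreewidth {V : Type} [Fintype V] [Nonempty V]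
    (G : SimpleGraph V) (k : ℕ) (h : layeredTreewidth G ≤ k) :
    (treewidth G : ℝ) ≤ 2 * Real.sqrt (k * Fintype.card V) - 1 := by
  classical
  obtain ⟨ι, T, B, L, hD⟩ := exists_isLayeredDecomp_of_layeredTreewidth_le h
  obtain ⟨ℓ, hℓ, hlo, hhi⟩ :=
    exists_pred_sq_mul_le_and_le_sq_mul hD.width_pos (Fintype.card_pos (α := V))
  obtain ⟨s, hs⟩ := exists_mul_card_dvd_add_le L hℓ
  have htw : ((treewidth G + 1 : ℕ) : ℝ) ≤ _ :=
    Nat.cast_le.mpr ((hD.add_const s).treewidth_add_one_le hℓ)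
  have := natCast_add_pred_mul_le_two_mul_sqrt hℓ hs hlo hhi
  push_cast at htw this
  linarith
end

section
/- If every graph in a class G has layered treewidth at most k, then G has linear local treewidth: for every graph G in the class, every vertex v, and every integer r ≥ 0, the subgraph induced by vertices at distance at most r from v has treewidth at most k(2r+1) − 1. -/
lemma layering_walk {V : Type} {G : SimpleGraph V} {L : V → ℕ} (hL : IsLayering G L)
    {a b : V} (p : G.Walk a b) : L a ≤ L b + p.length ∧ L b ≤ L a + p.length := by
  induction p with
  | nil => simp
  | cons h p ih =>
    obtain ⟨h1, h2⟩ := hL h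
    obtain ⟨i1, i2⟩ := ih
    simp only [SimpleGraph.Walk.length_cons]
    omega

lemma trivial_layered_decomp {V : Type} [Fintype V] (G : SimpleGraph V) :
    Fintype.card V ∈ {k | ∃ (ι : Type) (T : SimpleGraph ι) (B : ι → Finset V) (L : V → ℕ),
      IsTreeDecomp G T B ∧ IsLayering G L ∧
      ∀ x i, ((B x).filter (fun v => L v = i)).card ≤ k} := by
  classical
  refine ⟨Unit, ⊥, fun _ => Finset.univ, fun _ => 0, ⟨?_, ?_, ?_⟩, ?_, ?_⟩
  · constructor
    · constructor
      · intro a b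
        rw [Subsingleton.elim a b]
    · intro x c hc
      cases c with
      | nil => exact hc.ne_nil rfl
      | cons h _ => exact h.elim
  · intro a b _
    exact ⟨(), Finset.mem_univ _, Finset.mem_univ _⟩
  · intro u
    have : Nonempty {x : Unit | u ∈ (Finset.univ : Finset V)} := ⟨⟨(), by simp⟩⟩
    constructor
    intro a b
    rw [Subsingleton.elim a b]
  · intro a b _
    simp
  · intro x i
    exact (Finset.card_filter_le _ _).trans (by simp)

/-- Bounded layered treewidth implies linear local treewidth: if `G` has layered
treewidth at most `k`, then for every vertex `v` and radius `r`, the subgraph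
induced by the vertices at distance at most `r` from `v` has treewidth at most
`k(2r+1) − 1`. -/
theorem linear_local_treewidth {V : Type} [Fintype V] (G : SimpleGraph V) (k : ℕ)
    (h : layeredTreewidth G ≤ k) (v : V) (r : ℕ) :
    treewidth (G.induce {u | G.Reachable v u ∧ G.dist v u ≤ r}) ≤ k * (2 * r + 1) - 1 := by
  classical
  set S : Set V := {u | G.Reachable v u ∧ G.dist v u ≤ r} with hS
  have hne : {k | ∃ (ι : Type) (T : SimpleGraph ι) (B : ι → Finset V) (L : V → ℕ),
      IsTreeDecomp G T B ∧ IsLayering G L ∧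
      ∀ x i, ((B x).filter (fun v => L v = i)).card ≤ k}.Nonempty :=
    ⟨_, trivial_layered_decomp G⟩
  have hmem := Nat.sInf_mem hne
  obtain ⟨ι, T, B, L, hTD, hLay, hbag⟩ := hmem
  have hbag' : ∀ x i, ((B x).filter (fun u => L u = i)).card ≤ k :=
    fun x i => (hbag x i).trans h
  -- key: L-values in the ball are within r of L v
  have key : ∀ u ∈ S, L v ≤ L u + r ∧ L u ≤ L v + r := by
    intro u hu
    obtain ⟨hreach, hdist⟩ := hu
    obtain ⟨p, hp⟩ := hreach.exists_walk_length_eq_dist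
    obtain ⟨h1, h2⟩ := layering_walk hLay p
    omega
  unfold treewidth
  apply Nat.sInf_le
  refine ⟨ι, T, fun x => (B x).subtype (· ∈ S), ⟨hTD.1, ?_, ?_⟩, ?_⟩
  · intro a b hab
    obtain ⟨x, hx1, hx2⟩ := hTD.2.1 hab
    exact ⟨x, Finset.mem_subtype.mpr hx1, Finset.mem_subtype.mpr hx2⟩
  · intro a
    have : {x | a ∈ (B x).subtype (· ∈ S)} = {x | (a : V) ∈ B x} := by
      ext x; simp [Finset.mem_subtype]
    rw [this]
    exact hTD.2.2 a.val
  · intro x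
    rw [Finset.card_subtype]
    set s := (B x).filter (· ∈ S) with hs
    have hsub : s ⊆ (Finset.Icc (L v - r) (L v + r)).biUnion
        (fun i => s.filter (fun u => L u = i)) := by
      intro u hu
      have huS : u ∈ S := (Finset.mem_filter.mp hu).2
      obtain ⟨h1, h2⟩ := key u huS
      refine Finset.mem_biUnion.mpr ⟨L u, Finset.mem_Icc.mpr ⟨by omega, by omega⟩,
        Finset.mem_filter.mpr ⟨hu, rfl⟩⟩
    have hcard : s.card ≤ (2 * r + 1) * k := by
      calc s.card ≤ ((Finset.Icc (L v - r) (L v + r)).biUnion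
            (fun i => s.filter (fun u => L u = i))).card := Finset.card_le_card hsub
        _ ≤ ∑ i ∈ Finset.Icc (L v - r) (L v + r), (s.filter (fun u => L u = i)).card :=
            Finset.card_biUnion_le
        _ ≤ ∑ i ∈ Finset.Icc (L v - r) (L v + r), k := by
            refine Finset.sum_le_sum fun i _ => ?_
            refine le_trans (Finset.card_le_card ?_) (hbag' x i)
            intro u hu
            obtain ⟨hu1, hu2⟩ := Finset.mem_filter.mp hu
            exact Finset.mem_filter.mpr ⟨(Finset.mem_filter.mp hu1).1, hu2⟩
        _ = (Finset.Icc (L v - r) (L v + r)).card * k := by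
            rw [Finset.sum_const, smul_eq_mul]
        _ ≤ (2 * r + 1) * k := by
            apply Nat.mul_le_mul_right
            rw [Nat.card_Icc]
            omega
    calc s.card ≤ (2 * r + 1) * k := hcard
      _ = k * (2 * r + 1) := mul_comm _ _
      _ ≤ k * (2 * r + 1) - 1 + 1 := by omega
end

section
/- For every n ≥ 1, the graph G_n obtained from the 2n × 2n grid graph by adding both diagonals of every unit square face (i.e., vertex set [2n]×[2n], with (x,y) adjacent to (x',y') iff max(|x-x'|,|y-y'|) = 1) contains a complete graph K_n as a minor. -/
/-- The king-grid `G_n`: the `2n × 2n` grid graph with both diagonals of every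
unit square added; vertices are adjacent iff they are distinct and differ by at
most `1` in each coordinate. -/
def kingGrid (n : ℕ) : SimpleGraph (Fin (2 * n) × Fin (2 * n)) :=
  SimpleGraph.fromRel (fun a b =>
    a.1.val ≤ b.1.val + 1 ∧ b.1.val ≤ a.1.val + 1 ∧
    a.2.val ≤ b.2.val + 1 ∧ b.2.val ≤ a.2.val + 1)

/-- Column of path `i` at row `t`: goes from column `2i` down to `0`,
pauses one step, then goes back up. -/
def pFun (i t : ℕ) : ℕ := if t ≤ 2 * i then 2 * i - t else t - 2 * i - 1

lemma pFun_lt {n i t : ℕ} (hi : i < n) (ht : t < 2 * n) : pFun i t < 2 * n := by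
  unfold pFun; split <;> omega

lemma pFun_ne {i j t : ℕ} (_hij : i ≠ j) : pFun i t ≠ pFun j t := by
  unfold pFun; split <;> split <;> omega

lemma pFun_step (i t : ℕ) :
    pFun i t ≤ pFun i (t + 1) + 1 ∧ pFun i (t + 1) ≤ pFun i t + 1 := by
  unfold pFun; split <;> split <;> omega

lemma pFun_close {i j : ℕ} (_hij : i ≠ j) :
    pFun i (i + j) ≤ pFun j (i + j) + 1 ∧ pFun j (i + j) ≤ pFun i (i + j) + 1 := by
  unfold pFun; split <;> split <;> omega

/-- If consecutive values of `f` are adjacent, the induced graph on the range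
of `f` is connected. -/
lemma induce_range_connected {V : Type*} (G : SimpleGraph V) {m : ℕ} (hm : 0 < m)
    (f : Fin m → V)
    (h : ∀ (t : ℕ) (h1 : t + 1 < m), G.Adj (f ⟨t, by omega⟩) (f ⟨t + 1, h1⟩)) :
    (G.induce (Set.range f)).Connected := by
  have key : ∀ (t : ℕ) (ht : t < m),
      (G.induce (Set.range f)).Reachable
        ⟨f ⟨0, hm⟩, ⟨⟨0, hm⟩, rfl⟩⟩ ⟨f ⟨t, ht⟩, ⟨⟨t, ht⟩, rfl⟩⟩ := by
    intro t
    induction t with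
    | zero => intro ht; rfl
    | succ k ih =>
      intro ht
      have hk : k < m := by omega
      refine (ih hk).trans ?_
      refine SimpleGraph.Adj.reachable ?_
      show G.Adj (f ⟨k, hk⟩) (f ⟨k + 1, ht⟩)
      exact h k ht
  rw [SimpleGraph.connected_iff]
  constructor
  · rintro ⟨u, a, rfl⟩ ⟨v, b, rfl⟩
    rcases a with ⟨ta, hta⟩
    rcases b with ⟨tb, htb⟩
    exact ((key ta hta).symm.trans (key tb htb))
  · exact ⟨⟨f ⟨0, hm⟩, ⟨⟨0, hm⟩, rfl⟩⟩⟩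

/-- The king-grid `G_n` contains `K_n` as a minor: there are pairwise disjoint
connected branch sets `X 0, …, X (n-1)` with an edge between any two of them. -/
theorem kingGrid_hasCompleteMinor (n : ℕ) (hn : 1 ≤ n) :
    ∃ X : Fin n → Set (Fin (2 * n) × Fin (2 * n)),
      (∀ i, (X i).Nonempty) ∧
      (∀ i, ((kingGrid n).induce (X i)).Connected) ∧
      (Pairwise fun i j => Disjoint (X i) (X j)) ∧
      (∀ i j, i ≠ j → ∃ u ∈ X i, ∃ v ∈ X j, (kingGrid n).Adj u v) := by
  have h2n : 0 < 2 * n := by omega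
  set F : Fin n → Fin (2 * n) → Fin (2 * n) × Fin (2 * n) :=
    fun i t => (t, ⟨pFun i.val t.val, pFun_lt i.isLt t.isLt⟩) with hF
  refine ⟨fun i => Set.range (F i), ?_, ?_, ?_, ?_⟩
  · intro i
    exact ⟨F i ⟨0, h2n⟩, ⟨⟨0, h2n⟩, rfl⟩⟩
  · intro i
    refine induce_range_connected _ h2n (F i) ?_
    intro t h1
    have hne : F i ⟨t, by omega⟩ ≠ F i ⟨t + 1, h1⟩ := by
      intro hEq
      have : (⟨t, by omega⟩ : Fin (2 * n)) = ⟨t + 1, h1⟩ := congrArg Prod.fst hEq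
      simp [Fin.ext_iff] at this
    refine (SimpleGraph.fromRel_adj _ _ _).mpr ⟨hne, Or.inl ?_⟩
    have hs := pFun_step i.val t
    simp only [hF]
    exact ⟨by omega, by omega, by omega, by omega⟩
  · intro i j hij
    rw [Set.disjoint_left]
    rintro a ⟨ta, rfl⟩ ⟨tb, hb⟩
    have h1 : tb = ta := congrArg Prod.fst hb
    rw [h1] at hb
    have h2 : pFun j.val ta.val = pFun i.val ta.val := by
      simpa [hF, Fin.ext_iff] using congrArg Prod.snd hb
    exact pFun_ne (fun h => hij.symm (Fin.ext h)) h2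
  · intro i j hij
    have hvij : i.val ≠ j.val := fun h => hij (Fin.ext h)
    have hts : i.val + j.val < 2 * n := by
      have := i.isLt; have := j.isLt; omega
    refine ⟨F i ⟨i.val + j.val, hts⟩, ⟨_, rfl⟩, F j ⟨i.val + j.val, hts⟩, ⟨_, rfl⟩, ?_⟩
    have hne : F i ⟨i.val + j.val, hts⟩ ≠ F j ⟨i.val + j.val, hts⟩ := by
      intro hEq
      have h2 : pFun i.val (i.val + j.val) = pFun j.val (i.val + j.val) := by
        have := congrArg Prod.snd hEq
        simpa [hF, Fin.ext_iff] using this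
      exact pFun_ne hvij h2
    refine (SimpleGraph.fromRel_adj _ _ _).mpr ⟨hne, Or.inl ?_⟩
    have hc := pFun_close hvij
    simp only [hF]
    exact ⟨by omega, by omega, by omega, by omega⟩
end

section
/- Let G be a graph with n vertices such that every induced subgraph G' of G on n' vertices has treewidth at most c√(n') − 1, where c ≥ (1 − √(2/3))^{-1}. Then the pathwidth of G is at most c·(1 − √(2/3))^{-1}·√n − 1, and in particular less than (11c/2)·√n − 1. -/
open SimpleGraph

noncomputable def pathwidth {V : Type} (G : SimpleGraph V) : ℕ :=
  sInf {k | ∃ (m : ℕ) (B : Fin m → Finset V),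
    (∀ ⦃v w⦄, G.Adj v w → ∃ x, v ∈ B x ∧ w ∈ B x) ∧
    (∀ v : V, ∃ x, v ∈ B x) ∧
    (∀ (v : V) (x y z : Fin m), x ≤ y → y ≤ z → v ∈ B x → v ∈ B z → v ∈ B y) ∧
    ∀ x, (B x).card ≤ k + 1}


namespace PWAux

variable {ι : Type} {T : SimpleGraph ι}

/-- `b` is reachable from `a` by a walk avoiding `x`. -/
def Reach (T : SimpleGraph ι) (x a b : ι) : Prop := ∃ w : T.Walk a b, x ∉ w.support

lemma Reach.ne_left {x a b : ι} (h : Reach T x a b) : a ≠ x := by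
  obtain ⟨w, hw⟩ := h; rintro rfl; exact hw w.start_mem_support

lemma Reach.ne_right {x a b : ι} (h : Reach T x a b) : b ≠ x := by
  obtain ⟨w, hw⟩ := h; rintro rfl; exact hw w.end_mem_support

lemma Reach.refl' {x a : ι} (h : a ≠ x) : Reach T x a a :=
  ⟨Walk.nil, by simp [Ne.symm h]⟩

lemma Reach.symm {x a b : ι} (h : Reach T x a b) : Reach T x b a := by
  obtain ⟨w, hw⟩ := h
  exact ⟨w.reverse, by simpa [Walk.support_reverse] using hw⟩

lemma Reach.trans {x a b c : ι} (h1 : Reach T x a b) (h2 : Reach T x b c) :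
    Reach T x a c := by
  obtain ⟨w1, hw1⟩ := h1; obtain ⟨w2, hw2⟩ := h2
  refine ⟨w1.append w2, ?_⟩
  rw [Walk.mem_support_append_iff]
  tauto

/-- Key tree lemma: if `x ~ y` is an edge, there is no `b` with a walk `y → b`
avoiding `x` and a walk `b → x` avoiding `y`. -/
lemma key (hT : T.IsTree) {x y b : ι} (hxy : T.Adj x y)
    (h1 : Reach T x y b) (h2 : Reach T y b x) : False := by
  classical
  obtain ⟨w1, hw1⟩ := h1
  obtain ⟨w2, hw2⟩ := h2
  set W : T.Walk y x := w1.append w2 with hWdef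
  have hedge : s(y, x) ∉ W.edges := by
    intro hmem
    rw [hWdef, Walk.edges_append, List.mem_append] at hmem
    rcases hmem with hm | hm
    · rw [Sym2.eq_swap] at hm
      exact hw1 (Walk.fst_mem_support_of_mem_edges _ hm)
    · exact hw2 (Walk.fst_mem_support_of_mem_edges _ hm)
  have huniq : W.toPath = Path.singleton hxy.symm := hT.IsAcyclic.path_unique _ _
  have : s(y, x) ∈ (W.toPath : T.Walk y x).edges := by
    rw [huniq]; simp [Path.singleton]
  exact hedge (Walk.edges_toPath_subset W this)


section Centroid

variable {W : Type} (T) (S : W → Set ι)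

/-- Nodes reachable from the bag-set of `v` avoiding `x`. -/
def Dset (x : ι) (v : W) : Set ι := {z | ∃ a ∈ S v, Reach T x a z}

/-- The class of `v` at `x`. -/
def Cl (x : ι) (v : W) : Set W := {w | S w ⊆ Dset T S x v}

variable {T S}

lemma reach_of_mem_S
    (hco : ∀ v, ∀ a ∈ S v, ∀ b ∈ S v, ∃ w : T.Walk a b, ∀ z ∈ w.support, z ∈ S v)
    {v : W} {x a b : ι} (ha : a ∈ S v) (hb : b ∈ S v) (hx : x ∉ S v) :
    Reach T x a b := by
  obtain ⟨w, hw⟩ := hco v a ha b hb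
  exact ⟨w, fun hmem => hx (hw x hmem)⟩

lemma S_subset_D {v : W} {x : ι} (hx : x ∉ S v) : S v ⊆ Dset T S x v := by
  intro z hz
  exact ⟨z, hz, Reach.refl' (fun h => hx (h ▸ hz))⟩

lemma notmem_D {v : W} {x : ι} : x ∉ Dset T S x v := by
  rintro ⟨a, ha, hr⟩; exact hr.ne_right rfl

lemma mem_Cl_self {v : W} {x : ι} (hx : x ∉ S v) : v ∈ Cl T S x v := S_subset_D hx

lemma reach_of_mem_D
    (hco : ∀ v, ∀ a ∈ S v, ∀ b ∈ S v, ∃ w : T.Walk a b, ∀ z ∈ w.support, z ∈ S v)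
    {v : W} {x z₁ z₂ : ι} (hx : x ∉ S v)
    (h1 : z₁ ∈ Dset T S x v) (h2 : z₂ ∈ Dset T S x v) : Reach T x z₁ z₂ := by
  obtain ⟨a₁, ha₁, r₁⟩ := h1
  obtain ⟨a₂, ha₂, r₂⟩ := h2
  exact (r₁.symm.trans (reach_of_mem_S hco ha₁ ha₂ hx)).trans r₂

lemma Dset_eq_reach_from
    (hco : ∀ v, ∀ a ∈ S v, ∀ b ∈ S v, ∃ w : T.Walk a b, ∀ z ∈ w.support, z ∈ S v)
    {v : W} {x z : ι} (hz : z ∈ S v) (hx : x ∉ S v) :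
    Dset T S x v = {u | Reach T x z u} := by
  ext u
  constructor
  · rintro ⟨a, ha, r⟩
    exact (reach_of_mem_S hco hz ha hx).trans r
  · intro hr
    exact ⟨z, hz, hr⟩

lemma Dset_eq_of_subset (hne : ∀ v, (S v).Nonempty)
    (hco : ∀ v, ∀ a ∈ S v, ∀ b ∈ S v, ∃ w : T.Walk a b, ∀ z ∈ w.support, z ∈ S v)
    {u v : W} {x : ι} (hx : x ∉ S v) (hu : S u ⊆ Dset T S x v) :
    Dset T S x u = Dset T S x v := by
  obtain ⟨z, hz⟩ := hne u
  have hzD : z ∈ Dset T S x v := hu hz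
  have hxu : x ∉ S u := fun hmem => notmem_D (hu hmem)
  rw [Dset_eq_reach_from hco hz hxu]
  ext w
  constructor
  · intro hr
    obtain ⟨a, ha, r⟩ := hzD
    exact ⟨a, ha, r.trans hr⟩
  · intro hw
    exact reach_of_mem_D hco hx hzD hw

lemma Cl_eq_of_mem (hne : ∀ v, (S v).Nonempty)
    (hco : ∀ v, ∀ a ∈ S v, ∀ b ∈ S v, ∃ w : T.Walk a b, ∀ z ∈ w.support, z ∈ S v)
    {u v : W} {x : ι} (hx : x ∉ S v) (hu : u ∈ Cl T S x v) :
    Cl T S x u = Cl T S x v := by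
  unfold Cl
  rw [Dset_eq_of_subset hne hco hx hu]

lemma notmem_S_of_mem_Cl {u v : W} {x : ι} (hu : u ∈ Cl T S x v) : x ∉ S u :=
  fun hmem => notmem_D (hu hmem)

lemma exists_centroid [Fintype W] [Nonempty W] (hT : T.IsTree)
    (hne : ∀ v, (S v).Nonempty)
    (hco : ∀ v, ∀ a ∈ S v, ∀ b ∈ S v, ∃ w : T.Walk a b, ∀ z ∈ w.support, z ∈ S v) :
    ∃ x : ι, ∀ v : W, x ∉ S v → 2 * (Cl T S x v).ncard ≤ Fintype.card W := by
  classical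
  by_contra hcon
  push_neg at hcon
  set n := Fintype.card W with hn
  -- bad x v: x ∉ S v ∧ n < 2 * |Cl x v|
  obtain ⟨a₀, ha₀⟩ := hne (Classical.arbitrary W)
  have hK1ne : {k | ∃ x v, (x ∉ S v ∧ n < 2 * (Cl T S x v).ncard) ∧
      (Cl T S x v).ncard = k}.Nonempty := by
    obtain ⟨v, hv⟩ := hcon a₀
    exact ⟨_, a₀, v, hv, rfl⟩
  set K1 := sInf {k | ∃ x v, (x ∉ S v ∧ n < 2 * (Cl T S x v).ncard) ∧
      (Cl T S x v).ncard = k} with hK1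
  obtain ⟨x₁, v₁, hb₁, hw₁⟩ := Nat.sInf_mem hK1ne
  have hK2ne : {k | ∃ x v, (x ∉ S v ∧ n < 2 * (Cl T S x v).ncard) ∧
      (Cl T S x v).ncard = K1 ∧
      sInf ((T.dist x ·) '' (⋃ w ∈ Cl T S x v, S w)) = k}.Nonempty :=
    ⟨_, x₁, v₁, hb₁, hw₁, rfl⟩
  set K2 := sInf {k | ∃ x v, (x ∉ S v ∧ n < 2 * (Cl T S x v).ncard) ∧
      (Cl T S x v).ncard = K1 ∧
      sInf ((T.dist x ·) '' (⋃ w ∈ Cl T S x v, S w)) = k} with hK2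
  obtain ⟨x, v, ⟨hxv, hbig⟩, hwtK1, hddK2⟩ := Nat.sInf_mem hK2ne
  -- pick a ∈ S v, and the neighbor y of x towards a
  obtain ⟨a, ha⟩ := hne v
  have hax : x ≠ a := fun h => hxv (h ▸ ha)
  obtain ⟨w0⟩ := hT.isConnected.preconnected x a
  obtain ⟨pw, hpw⟩ := w0.toPath
  obtain ⟨y, hxy, q, rfl⟩ := Walk.exists_eq_cons_of_ne hax pw
  rw [Walk.cons_isPath_iff] at hpw
  have hyD : y ∈ Dset T S x v := ⟨a, ha, ⟨q.reverse, by
    simpa [Walk.support_reverse] using hpw.2⟩⟩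
  -- badness at y
  obtain ⟨v', hyv', hbig'⟩ := hcon y
  -- overlap of the two big classes
  have hIfin : (Cl T S x v ∩ Cl T S y v').Nonempty := by
    by_contra hemp
    rw [Set.not_nonempty_iff_eq_empty] at hemp
    have h1 := Set.ncard_union_add_ncard_inter (Cl T S x v) (Cl T S y v')
      (Set.toFinite _) (Set.toFinite _)
    rw [hemp] at h1
    have h2 : (Cl T S x v ∪ Cl T S y v').ncard ≤ n := by
      rw [hn, ← Nat.card_eq_fintype_card, ← Set.ncard_univ]
      exact Set.ncard_le_ncard (Set.subset_univ _) (Set.toFinite _)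
    simp only [Set.ncard_empty] at h1
    omega
  obtain ⟨u, huA, huB⟩ := hIfin
  -- D' ⊆ D
  have hD'D : Dset T S y v' ⊆ Dset T S x v := by
    intro z hz
    obtain ⟨b, hb⟩ := hne u
    have hbD' : b ∈ Dset T S y v' := huB hb
    have hbD : b ∈ Dset T S x v := huA hb
    obtain ⟨q₁, hq₁⟩ := reach_of_mem_D hco hyv' hbD' hz
    by_cases hxs : x ∈ q₁.support
    · have hR1 : Reach T y b x :=
        ⟨q₁.takeUntil x hxs, fun hmem => hq₁ (Walk.support_takeUntil_subset _ _ hmem)⟩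
      have hR2 : Reach T x y b := reach_of_mem_D hco hxv hyD hbD
      exact (key hT hxy hR2 hR1).elim
    · obtain ⟨a₂, ha₂, r₂⟩ := hbD
      exact ⟨a₂, ha₂, r₂.trans ⟨q₁, hxs⟩⟩
  have hCl' : Cl T S y v' ⊆ Cl T S x v := fun w hw =>
    Set.Subset.trans hw hD'D
  have hK1le : K1 ≤ (Cl T S y v').ncard := Nat.sInf_le ⟨y, v', ⟨hyv', hbig'⟩, rfl⟩
  have hwt'le : (Cl T S y v').ncard ≤ (Cl T S x v).ncard :=
    Set.ncard_le_ncard hCl' (Set.toFinite _)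
  have hwt'eq : (Cl T S y v').ncard = K1 := le_antisymm (hwtK1 ▸ hwt'le) hK1le
  have hCleq : Cl T S y v' = Cl T S x v :=
    Set.eq_of_subset_of_ncard_le hCl' (by rw [hwt'eq, hwtK1]) (Set.toFinite _)
  -- distance witness z₀
  have hNSne : ((T.dist x ·) '' (⋃ w ∈ Cl T S x v, S w)).Nonempty :=
    Set.Nonempty.image _ ⟨a, Set.mem_biUnion (mem_Cl_self hxv) ha⟩
  obtain ⟨z₀, hz₀NS, hz₀dist⟩ := Nat.sInf_mem hNSne
  rw [hddK2] at hz₀dist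
  -- z₀ lies in D' = Dset y v'
  have hz₀D' : z₀ ∈ Dset T S y v' := by
    rw [← hCleq] at hz₀NS
    obtain ⟨w₁, hw₁', hz₀w⟩ := Set.mem_iUnion₂.mp hz₀NS
    exact hw₁' hz₀w
  -- distance strictly decreases from x to y
  have hdistdec : T.dist y z₀ + 1 ≤ T.dist x z₀ := by
    obtain ⟨p, hp, hplen⟩ := (hT.isConnected.preconnected x z₀).exists_path_of_dist
    have hyp_supp : y ∈ p.support := by
      by_contra hyn
      obtain ⟨b', hb', r'⟩ := hz₀D'
      have hRyb'x : Reach T y b' x := r'.trans ⟨p.reverse, by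
        simpa [Walk.support_reverse] using hyn⟩
      have hb'D : b' ∈ Dset T S x v := hD'D (S_subset_D hyv' hb')
      have hRxyb' : Reach T x y b' := reach_of_mem_D hco hxv hyD hb'D
      exact key hT hxy hRxyb' hRyb'x
    have hsplit := Walk.take_spec p hyp_supp
    have hlen : (p.takeUntil y hyp_supp).length + (p.dropUntil y hyp_supp).length
        = p.length := by
      conv_rhs => rw [← hsplit]
      exact (Walk.length_append _ _).symm
    have hd1 : T.dist y z₀ ≤ (p.dropUntil y hyp_supp).length := dist_le _
    have hq2 : 1 ≤ (p.takeUntil y hyp_supp).length := by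
      by_contra hlt
      push_neg at hlt
      interval_cases hl : (p.takeUntil y hyp_supp).length
      · exact hxy.ne (Walk.eq_of_length_eq_zero hl)
    omega
  -- final contradiction
  have hdd'le : sInf ((T.dist y ·) '' (⋃ w ∈ Cl T S y v', S w)) ≤ T.dist y z₀ := by
    apply Nat.sInf_le
    refine ⟨z₀, ?_, rfl⟩
    rw [hCleq]
    exact hz₀NS
  have hK2le : K2 ≤ sInf ((T.dist y ·) '' (⋃ w ∈ Cl T S y v', S w)) :=
    Nat.sInf_le ⟨y, v', ⟨hyv', hbig'⟩, hwt'eq, rfl⟩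
  have hz₀dist' : T.dist x z₀ = K2 := hz₀dist
  omega

end Centroid

lemma grouping {W : Type} [Fintype W] (c : W → Set W) (W₀ : Set W)
    (P1 : ∀ v ∈ W₀, v ∈ c v) (P2 : ∀ v ∈ W₀, ∀ w ∈ c v, c w = c v)
    (P3 : ∀ v ∈ W₀, c v ⊆ W₀) (P4 : ∀ v ∈ W₀, 2 * (c v).ncard ≤ Fintype.card W) :
    ∃ A B : Set W, A ∪ B = W₀ ∧ Disjoint A B ∧ (∀ v ∈ A, c v ⊆ A) ∧ (∀ v ∈ B, c v ⊆ B) ∧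
      3 * A.ncard ≤ 2 * Fintype.card W ∧ 3 * B.ncard ≤ 2 * Fintype.card W := by
  classical
  set n := Fintype.card W with hn
  have hWn : ∀ s : Set W, s.ncard ≤ n := fun s => by
    rw [hn, ← Nat.card_eq_fintype_card, ← Set.ncard_univ]
    exact Set.ncard_le_ncard (Set.subset_univ _) (Set.toFinite _)
  -- helper: a class-closed set's complement within W₀ is class-closed
  have hBcl : ∀ (A : Set W), (∀ v ∈ A, c v ⊆ A) → A ⊆ W₀ →
      ∀ w ∈ W₀ \ A, c w ⊆ W₀ \ A := by
    intro A hAcl hAW w hw z hz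
    obtain ⟨hwW, hwA⟩ := hw
    refine ⟨P3 w hwW hz, fun hzA => ?_⟩
    have hcz : c z = c w := P2 w hwW z hz
    have : w ∈ c z := hcz ▸ P1 w hwW
    exact hwA (hAcl z hzA this)
  by_cases hcase : ∃ v ∈ W₀, n ≤ 3 * (c v).ncard
  · obtain ⟨v, hv, hbig⟩ := hcase
    have hsub : c v ⊆ W₀ := P3 v hv
    refine ⟨c v, W₀ \ c v, Set.union_diff_cancel hsub, Set.disjoint_sdiff_right,
      ?_, hBcl (c v) ?_ hsub, ?_, ?_⟩
    · intro w hw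
      rw [P2 v hv w hw]
    · intro w hw
      rw [P2 v hv w hw]
    · have h1 := P4 v hv
      have h2 := hWn (c v)
      omega
    · have h1 : (W₀ \ c v).ncard = W₀.ncard - (c v).ncard :=
        Set.ncard_diff hsub (Set.toFinite _)
      have h2 := hWn W₀
      have h3 : (c v).ncard ≤ W₀.ncard := Set.ncard_le_ncard hsub (Set.toFinite _)
      omega
  · push_neg at hcase
    set 𝒜 := Finset.univ.powerset.filter
      (fun U : Finset W => ↑U ⊆ W₀ ∧ (∀ v ∈ U, c v ⊆ ↑U) ∧ 3 * U.card ≤ 2 * n) with h𝒜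
    have hEm : (∅ : Finset W) ∈ 𝒜 := by
      simp [h𝒜]
    obtain ⟨A₀, hA₀mem, hmax⟩ := Finset.exists_max_image 𝒜 Finset.card ⟨∅, hEm⟩
    rw [h𝒜, Finset.mem_filter] at hA₀mem
    obtain ⟨-, hA₀sub, hA₀cl, hA₀size⟩ := hA₀mem
    have hA₀n : (A₀ : Set W).ncard = A₀.card := Set.ncard_coe_finset A₀
    by_cases hall : W₀ ⊆ ↑A₀
    · refine ⟨↑A₀, ∅, ?_, Set.disjoint_empty _, ?_, by simp, ?_, by simp⟩
      · rw [Set.union_empty]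
        exact le_antisymm hA₀sub hall
      · intro v hv
        exact (hA₀cl v (by exact_mod_cast hv)).trans (le_refl _)
      · rw [hA₀n]; exact hA₀size
    · have hbigA : n ≤ 3 * A₀.card := by
        by_contra hlt
        push_neg at hlt
        obtain ⟨v, hvW, hvA⟩ := Set.not_subset.mp hall
        set U' : Finset W := A₀ ∪ (c v).toFinset with hU'
        have hU'mem : U' ∈ 𝒜 := by
          rw [h𝒜, Finset.mem_filter]
          refine ⟨Finset.mem_powerset.mpr (Finset.subset_univ _), ?_, ?_, ?_⟩
          · intro z hz
            rw [hU'] at hz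
            rcases Finset.mem_union.mp (by exact_mod_cast hz) with hz' | hz'
            · exact hA₀sub hz'
            · exact P3 v hvW (Set.mem_toFinset.mp hz')
          · intro w hw
            rcases Finset.mem_union.mp hw with hw' | hw'
            · refine (hA₀cl w hw').trans ?_
              intro z hz
              exact Finset.mem_union_left _ (by exact_mod_cast hz)
            · rw [P2 v hvW w (Set.mem_toFinset.mp hw')]
              intro z hz
              exact Finset.mem_union_right _ (Set.mem_toFinset.mpr hz)
          · have hcard : U'.card ≤ A₀.card + (c v).toFinset.card := by
              rw [hU']; exact Finset.card_union_le _ _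
            have htf : (c v).toFinset.card = (c v).ncard :=
              (Set.ncard_eq_toFinset_card' (c v)).symm
            have := hcase v hvW
            omega
        have hlt2 : A₀.card < U'.card := by
          apply Finset.card_lt_card
          rw [hU']
          constructor
          · exact Finset.subset_union_left
          · intro hsub2
            exact hvA (by exact_mod_cast hsub2 (Finset.mem_union_right _
              (Set.mem_toFinset.mpr (P1 v hvW))))
        exact absurd (hmax U' hU'mem) (by omega)
      refine ⟨↑A₀, W₀ \ ↑A₀, Set.union_diff_cancel hA₀sub, Set.disjoint_sdiff_right,
        ?_, hBcl _ (fun v hv => hA₀cl v (by exact_mod_cast hv)) hA₀sub, ?_, ?_⟩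
      · intro v hv
        exact hA₀cl v (by exact_mod_cast hv)
      · rw [hA₀n]; exact hA₀size
      · have h1 : (W₀ \ ↑A₀).ncard = W₀.ncard - (↑A₀ : Set W).ncard :=
          Set.ncard_diff hA₀sub (Set.toFinite _)
        have h2 := hWn W₀
        have h3 : (↑A₀ : Set W).ncard ≤ W₀.ncard :=
          Set.ncard_le_ncard hA₀sub (Set.toFinite _)
        omega


/-- From a tree decomposition, get a balanced separator consisting of one bag. -/
lemma exists_separator {W : Type} [Fintype W] [Nonempty W] (H : SimpleGraph W)
    {ι : Type} {T : SimpleGraph ι} {Bg : ι → Finset W} (td : IsTreeDecomp H T Bg) :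
    ∃ (x : ι) (A C : Set W), A ∪ C = {v | v ∉ Bg x} ∧ Disjoint A C ∧
      (∀ a ∈ A, ∀ b ∈ C, ¬ H.Adj a b) ∧
      3 * A.ncard ≤ 2 * Fintype.card W ∧ 3 * C.ncard ≤ 2 * Fintype.card W := by
  obtain ⟨hT, hedge, hconn⟩ := td
  set S : W → Set ι := fun v => {x | v ∈ Bg x} with hS
  have hne : ∀ v, (S v).Nonempty := by
    intro v
    obtain ⟨⟨x, hx⟩⟩ := (hconn v).nonempty
    exact ⟨x, hx⟩
  have hco : ∀ v, ∀ a ∈ S v, ∀ b ∈ S v, ∃ w : T.Walk a b, ∀ z ∈ w.support, z ∈ S v := by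
    intro v a ha b hb
    obtain ⟨w⟩ := (hconn v).preconnected ⟨a, ha⟩ ⟨b, hb⟩
    let f : T.induce (S v) →g T := ⟨Subtype.val, fun {p q} h => h⟩
    refine ⟨w.map f, ?_⟩
    intro z hz
    rw [Walk.support_map] at hz
    obtain ⟨⟨z', hz'⟩, -, rfl⟩ := List.mem_map.mp hz
    exact hz'
  obtain ⟨x, hx⟩ := exists_centroid hT hne hco
  have hW₀ : {v : W | v ∉ Bg x} = {v : W | x ∉ S v} := rfl
  obtain ⟨A, C, hun, hdis, hclA, hclC, h3A, h3C⟩ := grouping (Cl T S x) {v | x ∉ S v}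
    (fun v hv => mem_Cl_self hv)
    (fun v hv w hw => Cl_eq_of_mem hne hco hv hw)
    (fun v hv w hw => notmem_S_of_mem_Cl hw)
    (fun v hv => hx v hv)
  refine ⟨x, A, C, hW₀ ▸ hun, hdis, ?_, h3A, h3C⟩
  intro a haA b hbC hadj
  obtain ⟨z, hza, hzb⟩ := hedge hadj
  have haW₀ : x ∉ S a := by
    have := hun ▸ Set.mem_union_left C haA
    exact this
  have hbW₀ : x ∉ S b := by
    have := hun ▸ Set.mem_union_right A hbC
    exact this
  have hDab : Dset T S x a = Dset T S x b := by
    rw [Dset_eq_reach_from hco hza haW₀, Dset_eq_reach_from hco hzb hbW₀]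
  have hbCl : b ∈ Cl T S x a := by
    have := mem_Cl_self (S := S) (T := T) hbW₀
    unfold Cl at this ⊢
    rw [hDab]
    exact this
  have : b ∈ A := hclA a haA hbCl
  exact (Set.disjoint_left.mp hdis this) hbC

/-- The defining set of `treewidth` is nonempty, hence the `sInf` is attained. -/
lemma tw_attained {W : Type} [Fintype W] [Nonempty W] (H : SimpleGraph W) :
    ∃ (ι : Type) (T : SimpleGraph ι) (B : ι → Finset W),
      IsTreeDecomp H T B ∧ ∀ x, (B x).card ≤ treewidth H + 1 := by
  have hne : {k | ∃ (ι : Type) (T : SimpleGraph ι) (B : ι → Finset W),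
      IsTreeDecomp H T B ∧ ∀ x, (B x).card ≤ k + 1}.Nonempty := by
    refine ⟨Fintype.card W - 1, PUnit, ⊥, fun _ => Finset.univ, ⟨⟨?_, ?_⟩, ?_, ?_⟩, ?_⟩
    · constructor
      · intro u v
        rw [Subsingleton.elim u v]
    · intro v c hc
      cases c with
      | nil => exact hc.ne_nil rfl
      | cons h p => exact h.elim
    · intro v w h
      exact ⟨PUnit.unit, Finset.mem_univ _, Finset.mem_univ _⟩
    · intro v
      haveI : Nonempty ↥{x : PUnit | v ∈ (fun _ => (Finset.univ : Finset W)) x} :=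
        ⟨⟨PUnit.unit, by simp⟩⟩
      constructor
      intro a b
      rw [Subsingleton.elim a b]
    · intro x
      have : 1 ≤ Fintype.card W := Fintype.card_pos
      simp only [Finset.card_univ]
      omega
  exact Nat.sInf_mem hne


/-- existence of a "path decomposition" of the part of `G` inside `s`,
with bags indexed by `ℕ`, all of size at most `r`. -/
def PDN {V : Type} (G : SimpleGraph V) (s : Set V) (r : ℝ) : Prop :=
  ∃ (m : ℕ) (B : ℕ → Finset V),
    (∀ i, ↑(B i) ⊆ s) ∧
    (∀ i, m ≤ i → B i = ∅) ∧
    (∀ v w, v ∈ s → w ∈ s → G.Adj v w → ∃ i, v ∈ B i ∧ w ∈ B i) ∧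
    (∀ v ∈ s, ∃ i, v ∈ B i) ∧
    (∀ (v : V) (i j k : ℕ), i ≤ j → j ≤ k → v ∈ B i → v ∈ B k → v ∈ B j) ∧
    (∀ i, ((B i).card : ℝ) ≤ r)

lemma PDN.empty {V : Type} (G : SimpleGraph V) {r : ℝ} (hr : 0 ≤ r) :
    PDN G ∅ r := by
  refine ⟨0, fun _ => ∅, by simp, fun _ _ => rfl, by simp, by simp, by simp, by simpa⟩

lemma PDN.mono {V : Type} {G : SimpleGraph V} {s : Set V} {r r' : ℝ}
    (h : PDN G s r) (hrr : r ≤ r') : PDN G s r' := by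
  obtain ⟨m, B, h1, h2, h3, h4, h5, h6⟩ := h
  exact ⟨m, B, h1, h2, h3, h4, h5, fun i => (h6 i).trans hrr⟩

lemma PDN.glue {V : Type} {G : SimpleGraph V} {A C s : Set V} {X : Finset V} {rA rC : ℝ}
    (hrA : 0 ≤ rA) (hrC : 0 ≤ rC)
    (hA : PDN G A rA) (hC : PDN G C rC)
    (hcover : A ∪ C ∪ ↑X = s)
    (hdAX : Disjoint A ↑X) (hdCX : Disjoint C ↑X) (hdAC : Disjoint A C)
    (hsep : ∀ a ∈ A, ∀ b ∈ C, ¬ G.Adj a b) :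
    PDN G s (max rA rC + X.card) := by
  classical
  obtain ⟨mA, BA, hA1, hA2, hA3, hA4, hA5, hA6⟩ := hA
  obtain ⟨mC, BC, hC1, hC2, hC3, hC4, hC5, hC6⟩ := hC
  set m := mA + 1 + mC with hm
  set B : ℕ → Finset V := fun i =>
    if i < mA then BA i ∪ X
    else if i = mA then X
    else if i < m then BC (i - (mA + 1)) ∪ X
    else ∅ with hB
  have hAs : A ⊆ s := hcover ▸ fun v hv => Set.mem_union_left _ (Set.mem_union_left _ hv)
  have hCs : C ⊆ s := hcover ▸ fun v hv => Set.mem_union_left _ (Set.mem_union_right _ hv)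
  have hXs : ↑X ⊆ s := hcover ▸ fun v hv => Set.mem_union_right _ hv
  -- X is in every bag with index < m
  have hXmem : ∀ i < m, ∀ v ∈ X, v ∈ B i := by
    intro i hi v hv
    rw [hB]
    dsimp only
    split_ifs with h1 h2
    · exact Finset.mem_union_right _ hv
    · exact hv
    · exact Finset.mem_union_right _ hv
  -- characterization of membership for v ∉ X
  have hchar : ∀ v i, v ∉ X → v ∈ B i →
      (i < mA ∧ v ∈ BA i) ∨ (mA < i ∧ i < m ∧ v ∈ BC (i - (mA + 1))) := by
    intro v i hvX hvB
    rw [hB] at hvB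
    dsimp only at hvB
    split_ifs at hvB with h1 h2 h3
    · rcases Finset.mem_union.mp hvB with h | h
      · exact Or.inl ⟨h1, h⟩
      · exact absurd h hvX
    · exact absurd hvB hvX
    · rcases Finset.mem_union.mp hvB with h | h
      · exact Or.inr ⟨by omega, h3, h⟩
      · exact absurd h hvX
    · exact absurd hvB (Finset.notMem_empty v)
  have hnotmemA : ∀ v ∈ A, v ∉ X := fun v hv => Set.disjoint_left.mp hdAX hv
  have hnotmemC : ∀ v ∈ C, v ∉ X := fun v hv => Set.disjoint_left.mp hdCX hv
  have hBAsub : ∀ i, ∀ v ∈ BA i, v ∈ A := fun i v hv => hA1 i hv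
  have hBCsub : ∀ i, ∀ v ∈ BC i, v ∈ C := fun i v hv => hC1 i hv
  -- index bounds from bag membership in original decompositions
  have hBAlt : ∀ i v, v ∈ BA i → i < mA := by
    intro i v hv
    by_contra hge
    rw [hA2 i (by omega)] at hv
    exact Finset.notMem_empty v hv
  have hBClt : ∀ i v, v ∈ BC i → i < mC := by
    intro i v hv
    by_contra hge
    rw [hC2 i (by omega)] at hv
    exact Finset.notMem_empty v hv
  -- membership lemmas for building bags
  have hmkA : ∀ i v, v ∈ BA i → v ∈ B i := by
    intro i v hv
    have hi := hBAlt i v hv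
    rw [hB]; dsimp only
    rw [if_pos hi]
    exact Finset.mem_union_left _ hv
  have hmkC : ∀ j v, v ∈ BC j → v ∈ B (mA + 1 + j) := by
    intro j v hv
    have hj := hBClt j v hv
    rw [hB]; dsimp only
    rw [if_neg (by omega), if_neg (by omega), if_pos (by omega)]
    have : mA + 1 + j - (mA + 1) = j := by omega
    rw [this]
    exact Finset.mem_union_left _ hv
  refine ⟨m, B, ?_, ?_, ?_, ?_, ?_, ?_⟩
  · -- bags within s
    intro i v hv
    rcases Classical.em (v ∈ X) with hvX | hvX
    · exact hXs hvX
    · rcases hchar v i hvX hv with ⟨-, h⟩ | ⟨-, -, h⟩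
      · exact hAs (hBAsub _ _ h)
      · exact hCs (hBCsub _ _ h)
  · -- bags vanish beyond m
    intro i hi
    rw [hB]; dsimp only
    rw [if_neg (by omega), if_neg (by omega), if_neg (by omega)]
  · -- edges covered
    intro v w hvs hws hadj
    have hv3 : v ∈ A ∪ C ∪ ↑X := hcover ▸ hvs
    have hw3 : w ∈ A ∪ C ∪ ↑X := hcover ▸ hws
    rcases hv3 with (hvA | hvC) | hvX
    · rcases hw3 with (hwA | hwC) | hwX
      · obtain ⟨i, hvi, hwi⟩ := hA3 v w hvA hwA hadj
        exact ⟨i, hmkA i v hvi, hmkA i w hwi⟩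
      · exact absurd hadj (hsep v hvA w hwC)
      · obtain ⟨i, hvi⟩ := hA4 v hvA
        have hi := hBAlt i v hvi
        exact ⟨i, hmkA i v hvi, hXmem i (by omega) w hwX⟩
    · rcases hw3 with (hwA | hwC) | hwX
      · exact absurd hadj.symm (hsep w hwA v hvC)
      · obtain ⟨i, hvi, hwi⟩ := hC3 v w hvC hwC hadj
        exact ⟨mA + 1 + i, hmkC i v hvi, hmkC i w hwi⟩
      · obtain ⟨i, hvi⟩ := hC4 v hvC
        exact ⟨mA + 1 + i, hmkC i v hvi,
          hXmem (mA + 1 + i) (by have := hBClt i v hvi; omega) w hwX⟩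
    · rcases hw3 with (hwA | hwC) | hwX
      · obtain ⟨i, hwi⟩ := hA4 w hwA
        exact ⟨i, hXmem i (by have := hBAlt i w hwi; omega) v hvX, hmkA i w hwi⟩
      · obtain ⟨i, hwi⟩ := hC4 w hwC
        exact ⟨mA + 1 + i, hXmem (mA + 1 + i) (by have := hBClt i w hwi; omega) v hvX,
          hmkC i w hwi⟩
      · exact ⟨mA, hXmem mA (by omega) v hvX, hXmem mA (by omega) w hwX⟩
  · -- vertices covered
    intro v hvs
    have hv3 : v ∈ A ∪ C ∪ ↑X := hcover ▸ hvs
    rcases hv3 with (hvA | hvC) | hvX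
    · obtain ⟨i, hvi⟩ := hA4 v hvA
      exact ⟨i, hmkA i v hvi⟩
    · obtain ⟨i, hvi⟩ := hC4 v hvC
      exact ⟨mA + 1 + i, hmkC i v hvi⟩
    · exact ⟨mA, hXmem mA (by omega) v hvX⟩
  · -- convexity
    intro v i j k hij hjk hvi hvk
    rcases Classical.em (v ∈ X) with hvX | hvX
    · -- v is in every bag up to m
      have hkm : k < m := by
        by_contra hge
        rw [hB] at hvk; dsimp only at hvk
        rw [if_neg (by omega), if_neg (by omega), if_neg (by omega)] at hvk
        exact Finset.notMem_empty v hvk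
      exact hXmem j (by omega) v hvX
    · rcases hchar v i hvX hvi with ⟨hi1, hi2⟩ | ⟨hi1, hi1', hi2⟩ <;>
        rcases hchar v k hvX hvk with ⟨hk1, hk2⟩ | ⟨hk1, hk1', hk2⟩
      · -- both in A part
        have : v ∈ BA j := hA5 v i j k hij hjk hi2 hk2
        exact hmkA j v this
      · -- A then C: v in both A and C, contradiction
        exact absurd (hBCsub _ _ hk2)
          (Set.disjoint_left.mp hdAC (hBAsub _ _ hi2))
      · -- C then A: impossible index order
        omega
      · -- both in C part
        have hidx : i - (mA + 1) ≤ j - (mA + 1) ∧ j - (mA + 1) ≤ k - (mA + 1) := by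
          omega
        have : v ∈ BC (j - (mA + 1)) :=
          hC5 v (i - (mA + 1)) (j - (mA + 1)) (k - (mA + 1)) hidx.1 hidx.2 hi2 hk2
        have hj : mA + 1 + (j - (mA + 1)) = j := by omega
        have := hmkC (j - (mA + 1)) v this
        rwa [hj] at this
  · -- bag sizes
    intro i
    rw [hB]; dsimp only
    split_ifs with h1 h2 h3
    · calc ((BA i ∪ X).card : ℝ) ≤ (BA i).card + X.card := by
            exact_mod_cast Finset.card_union_le _ _
        _ ≤ max rA rC + X.card := by
            have := hA6 i
            have : (BA i).card ≤ (max rA rC : ℝ) := this.trans (le_max_left _ _)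
            linarith
    · have : (0:ℝ) ≤ max rA rC := le_trans hrA (le_max_left _ _)
      push_cast
      linarith
    · calc ((BC (i - (mA+1)) ∪ X).card : ℝ) ≤ (BC (i - (mA+1))).card + X.card := by
            exact_mod_cast Finset.card_union_le _ _
        _ ≤ max rA rC + X.card := by
            have := hC6 (i - (mA+1))
            have : (BC (i - (mA+1))).card ≤ (max rA rC : ℝ) := this.trans (le_max_right _ _)
            linarith
    · simp only [Finset.card_empty, Nat.cast_zero]
      have : (0:ℝ) ≤ max rA rC := le_trans hrA (le_max_left _ _)
      have hx0 : (0:ℝ) ≤ X.card := Nat.cast_nonneg _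
      linarith


section Real

lemma sqrt23_lt_one : Real.sqrt (2/3) < 1 := by
  rw [Real.sqrt_lt' one_pos]
  norm_num

lemma Kfacts : 0 < 1 - Real.sqrt (2/3) ∧ 1 ≤ (1 - Real.sqrt (2/3))⁻¹ ∧
    (1 - Real.sqrt (2/3))⁻¹ < 11/2 := by
  have h0 : 0 ≤ Real.sqrt (2/3) := Real.sqrt_nonneg _
  have h1 : Real.sqrt (2/3) < 9/11 := by
    rw [Real.sqrt_lt' (by norm_num)]
    norm_num
  have hpos : 0 < 1 - Real.sqrt (2/3) := by linarith [sqrt23_lt_one]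
  refine ⟨hpos, ?_, ?_⟩
  · rw [le_inv_comm₀ one_pos hpos]
    simp only [inv_one]
    linarith
  · have h2 : (2/11 : ℝ) < 1 - Real.sqrt (2/3) := by linarith
    have h3 := (inv_lt_inv₀ hpos (by norm_num : (0:ℝ) < 2/11)).mpr h2
    have h4 : ((2:ℝ)/11)⁻¹ = 11/2 := by norm_num
    rw [h4] at h3
    exact h3

end Real

lemma main_ind {V : Type} [Fintype V] (G : SimpleGraph V) (c : ℝ)
    (hc : (1 - Real.sqrt (2/3))⁻¹ ≤ c)
    (h : ∀ s : Set V, s.Nonempty →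
      (treewidth (G.induce s) : ℝ) ≤ c * Real.sqrt s.ncard - 1) :
    ∀ (n : ℕ) (s : Set V), s.ncard ≤ n →
      PDN G s (c * (1 - Real.sqrt (2/3))⁻¹ * Real.sqrt s.ncard) := by
  classical
  obtain ⟨hq0, hK1, hK2⟩ := Kfacts
  set q : ℝ := Real.sqrt (2/3) with hqdef
  set K : ℝ := (1 - q)⁻¹ with hKdef
  have hKq : K * (1 - q) = 1 := inv_mul_cancel₀ (ne_of_gt hq0)
  have hc1 : 1 ≤ c := hK1.trans hc
  have hcK0 : 0 ≤ c * K := by positivity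
  have hq00 : 0 ≤ q := Real.sqrt_nonneg _
  intro n
  induction n with
  | zero =>
    intro s hs
    have : s = ∅ := by
      rw [← Set.ncard_eq_zero (Set.toFinite s)]
      omega
    subst this
    exact PDN.empty G (by positivity)
  | succ n ih =>
    intro s hs
    rcases Set.eq_empty_or_nonempty s with rfl | hsne
    · exact PDN.empty G (by positivity)
    haveI : Fintype ↥s := Fintype.ofFinite ↥s
    haveI : Nonempty ↥s := hsne.to_subtype
    set n' := s.ncard with hn'
    have hcard : Fintype.card ↥s = n' := by
      rw [← Nat.card_eq_fintype_card, Nat.card_coe_set_eq]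
    have hn'pos : 0 < n' := by
      rw [hn']
      exact (Set.ncard_pos (Set.toFinite s)).mpr hsne
    obtain ⟨ι, T, Bg, td, hbag⟩ := tw_attained (G.induce s)
    obtain ⟨x, A₁, C₁, hun, hdis, hsepA, h3A, h3C⟩ := exists_separator (G.induce s) td
    set A : Set V := Subtype.val '' A₁ with hA
    set C : Set V := Subtype.val '' C₁ with hC
    set X : Finset V := (Bg x).map ⟨Subtype.val, Subtype.val_injective⟩ with hX
    have hAn : A.ncard = A₁.ncard := Set.ncard_image_of_injective _ Subtype.val_injective
    have hCn : C.ncard = C₁.ncard := Set.ncard_image_of_injective _ Subtype.val_injective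
    rw [hcard] at h3A h3C
    -- strict decrease
    have hAlt : A.ncard ≤ n := by rw [hAn]; omega
    have hClt : C.ncard ≤ n := by rw [hCn]; omega
    have ihA := ih A hAlt
    have ihC := ih C hClt
    -- cover
    have hXcoe : (↑X : Set V) = Subtype.val '' (↑(Bg x) : Set ↥s) := by
      rw [hX]; simp
    have hcover : A ∪ C ∪ ↑X = s := by
      ext v
      constructor
      · rintro ((⟨a, _, rfl⟩ | ⟨a, _, rfl⟩) | hv)
        · exact a.2
        · exact a.2
        · rw [hXcoe] at hv
          obtain ⟨a, _, rfl⟩ := hv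
          exact a.2
      · intro hv
        by_cases hvb : (⟨v, hv⟩ : ↥s) ∈ Bg x
        · refine Or.inr ?_
          rw [hXcoe]
          exact ⟨⟨v, hv⟩, hvb, rfl⟩
        · have : (⟨v, hv⟩ : ↥s) ∈ A₁ ∪ C₁ := by rw [hun]; exact hvb
          rcases this with h' | h'
          · exact Or.inl (Or.inl ⟨_, h', rfl⟩)
          · exact Or.inl (Or.inr ⟨_, h', rfl⟩)
    -- disjointness
    have hmemW₀ : ∀ w : ↥s, w ∈ A₁ ∪ C₁ → w ∉ Bg x := by
      intro w hw; rw [hun] at hw; exact hw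
    have hdAX : Disjoint A (↑X : Set V) := by
      rw [Set.disjoint_left]
      rintro v ⟨a, ha, rfl⟩ hvX
      rw [hXcoe] at hvX
      obtain ⟨b, hb, hba⟩ := hvX
      rw [Subtype.val_injective hba] at hb
      exact hmemW₀ a (Or.inl ha) hb
    have hdCX : Disjoint C (↑X : Set V) := by
      rw [Set.disjoint_left]
      rintro v ⟨a, ha, rfl⟩ hvX
      rw [hXcoe] at hvX
      obtain ⟨b, hb, hba⟩ := hvX
      rw [Subtype.val_injective hba] at hb
      exact hmemW₀ a (Or.inr ha) hb
    have hdAC : Disjoint A C := by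
      rw [Set.disjoint_left]
      rintro v ⟨a, ha, rfl⟩ ⟨b, hb, hba⟩
      rw [Subtype.val_injective hba] at hb
      exact Set.disjoint_left.mp hdis ha hb
    have hsep : ∀ a ∈ A, ∀ b ∈ C, ¬ G.Adj a b := by
      rintro v ⟨a, ha, rfl⟩ w ⟨b, hb, rfl⟩ hadj
      exact hsepA a ha b hb hadj
    have hglue := PDN.glue (by positivity) (by positivity) ihA ihC hcover hdAX hdCX hdAC hsep
    refine hglue.mono ?_
    -- size estimates
    have hXcard : (X.card : ℝ) ≤ c * Real.sqrt n' := by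
      have h1 : X.card = (Bg x).card := Finset.card_map _
      have h2 := hbag x
      have h3 := h s hsne
      rw [← hn'] at h3
      have : ((Bg x).card : ℝ) ≤ (treewidth (G.induce s) : ℝ) + 1 := by exact_mod_cast h2
      rw [h1]
      linarith
    have hsqrtA : Real.sqrt A.ncard ≤ q * Real.sqrt n' := by
      have h1 : (A.ncard : ℝ) ≤ 2/3 * n' := by
        have h0 : 3 * A.ncard ≤ 2 * n' := by rw [hAn]; exact h3A
        have : (3 * A.ncard : ℝ) ≤ 2 * n' := by exact_mod_cast h0
        linarith
      calc Real.sqrt A.ncard ≤ Real.sqrt (2/3 * n') := Real.sqrt_le_sqrt h1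
        _ = q * Real.sqrt n' := Real.sqrt_mul (by norm_num) _
    have hsqrtC : Real.sqrt C.ncard ≤ q * Real.sqrt n' := by
      have h1 : (C.ncard : ℝ) ≤ 2/3 * n' := by
        have h0 : 3 * C.ncard ≤ 2 * n' := by rw [hCn]; exact h3C
        have : (3 * C.ncard : ℝ) ≤ 2 * n' := by exact_mod_cast h0
        linarith
      calc Real.sqrt C.ncard ≤ Real.sqrt (2/3 * n') := Real.sqrt_le_sqrt h1
        _ = q * Real.sqrt n' := Real.sqrt_mul (by norm_num) _
    have hmax : max (c * K * Real.sqrt A.ncard) (c * K * Real.sqrt C.ncard)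
        ≤ c * K * (q * Real.sqrt n') := by
      apply max_le
      · exact mul_le_mul_of_nonneg_left hsqrtA hcK0
      · exact mul_le_mul_of_nonneg_left hsqrtC hcK0
    have hkey : c * K * (q * Real.sqrt n') + c * Real.sqrt n' = c * K * Real.sqrt n' := by
      have : K * q + 1 = K := by
        have : K * q + K * (1 - q) = K := by ring
        linarith [hKq]
      nlinarith [this]
    linarith [hmax, hXcard, hkey]


end PWAux

open PWAux in
/-- If every nonempty induced subgraph of an `n`-vertex graph `G` on `n'` vertices
has treewidth at most `c√(n') − 1`, where `c ≥ (1 − √(2/3))⁻¹`, then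
`pw(G) ≤ c(1 − √(2/3))⁻¹ √n − 1 < (11c/2)√n − 1`. -/
theorem pathwidth_of_treewidth_sqrt {V : Type} [Fintype V] [Nonempty V]
    (G : SimpleGraph V) (c : ℝ) (hc : (1 - Real.sqrt (2/3))⁻¹ ≤ c)
    (h : ∀ s : Set V, s.Nonempty →
      (treewidth (G.induce s) : ℝ) ≤ c * Real.sqrt s.ncard - 1) :
    (pathwidth G : ℝ) ≤ c * (1 - Real.sqrt (2/3))⁻¹ * Real.sqrt (Fintype.card V) - 1 ∧
    (pathwidth G : ℝ) < 11 * c / 2 * Real.sqrt (Fintype.card V) - 1 := by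
  classical
  obtain ⟨hq0, hK1, hK2⟩ := Kfacts
  set q : ℝ := Real.sqrt (2/3) with hqdef
  set K : ℝ := (1 - q)⁻¹ with hKdef
  have hc1 : 1 ≤ c := hK1.trans hc
  set n := Fintype.card V with hn
  have hn1 : 1 ≤ n := Fintype.card_pos
  have huniv : (Set.univ : Set V).ncard = n := by
    rw [Set.ncard_univ, Nat.card_eq_fintype_card]
  have hpd := main_ind G c hc h n Set.univ (le_of_eq huniv)
  rw [huniv] at hpd
  obtain ⟨m, B, hB1, hB2, hB3, hB4, hB5, hB6⟩ := hpd
  have hsq1 : 1 ≤ Real.sqrt n := by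
    rw [show (1:ℝ) = Real.sqrt 1 by simp]
    apply Real.sqrt_le_sqrt
    exact_mod_cast hn1
  have hcK1 : (1:ℝ) ≤ c * K := by
    have := mul_le_mul hc1 hK1 zero_le_one (by linarith : (0:ℝ) ≤ c)
    linarith
  have hr1 : 1 ≤ c * K * Real.sqrt n := by
    have := mul_le_mul hcK1 hsq1 zero_le_one (by linarith : (0:ℝ) ≤ c * K)
    linarith
  set M := ⌊c * K * Real.sqrt n⌋₊ with hM
  have hM1 : 1 ≤ M := Nat.le_floor (by exact_mod_cast hr1)
  have hMle : (M : ℝ) ≤ c * K * Real.sqrt n := Nat.floor_le (by nlinarith)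
  -- index bound from membership
  have hidx : ∀ v i, v ∈ B i → i < m := by
    intro v i hv
    by_contra hge
    rw [hB2 i (by omega)] at hv
    exact Finset.notMem_empty v hv
  have hmem : (M - 1) ∈ {k | ∃ (m : ℕ) (B : Fin m → Finset V),
      (∀ ⦃v w⦄, G.Adj v w → ∃ x, v ∈ B x ∧ w ∈ B x) ∧
      (∀ v : V, ∃ x, v ∈ B x) ∧
      (∀ (v : V) (x y z : Fin m), x ≤ y → y ≤ z → v ∈ B x → v ∈ B z → v ∈ B y) ∧
      ∀ x, (B x).card ≤ (M - 1) + 1} := by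
    refine ⟨m, fun i => B i.val, ?_, ?_, ?_, ?_⟩
    · intro v w hadj
      obtain ⟨i, hvi, hwi⟩ := hB3 v w trivial trivial hadj
      exact ⟨⟨i, hidx v i hvi⟩, hvi, hwi⟩
    · intro v
      obtain ⟨i, hvi⟩ := hB4 v trivial
      exact ⟨⟨i, hidx v i hvi⟩, hvi⟩
    · intro v x y z hxy hyz hvx hvz
      exact hB5 v x.val y.val z.val hxy hyz hvx hvz
    · intro i
      have hle : (B i.val).card ≤ M := Nat.le_floor (hB6 i.val)
      show (B i.val).card ≤ (M - 1) + 1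
      omega
  have hpw : pathwidth G ≤ M - 1 := Nat.sInf_le hmem
  have hpwR : (pathwidth G : ℝ) ≤ (M : ℝ) - 1 := by
    have h1 : ((M - 1 : ℕ) : ℝ) = (M : ℝ) - 1 := by
      rw [Nat.cast_sub hM1]; norm_num
    calc (pathwidth G : ℝ) ≤ ((M - 1 : ℕ) : ℝ) := by exact_mod_cast hpw
      _ = (M : ℝ) - 1 := h1
  constructor
  · calc (pathwidth G : ℝ) ≤ (M : ℝ) - 1 := hpwR
      _ ≤ c * K * Real.sqrt n - 1 := by linarith
  · have hsqpos : (0:ℝ) < Real.sqrt n := lt_of_lt_of_le one_pos hsq1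
    have hcpos : (0:ℝ) < c := lt_of_lt_of_le one_pos hc1
    have hlt : c * K * Real.sqrt n < 11 * c / 2 * Real.sqrt n := by
      have h5 : c * K < c * (11/2) := by
        exact mul_lt_mul_of_pos_left hK2 hcpos
      have h6 := mul_lt_mul_of_pos_right h5 hsqpos
      calc c * K * Real.sqrt n < c * (11/2) * Real.sqrt n := h6
        _ = 11 * c / 2 * Real.sqrt n := by ring
    calc (pathwidth G : ℝ) ≤ (M : ℝ) - 1 := hpwR
      _ ≤ c * K * Real.sqrt n - 1 := by linarith
      _ < 11 * c / 2 * Real.sqrt n - 1 := by linarith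
end

section
/- Every n-vertex graph with layered treewidth k has pathwidth at most 11√(kn) − 1. -/
/-!
Fix a tree decomposition and a layering in which every bag has at most `k` vertices in each layer.
Deleting the sparsest residue class of layers modulo `p` removes at most `n / p` vertices and
leaves bands of fewer than `p` consecutive layers; the components of what remains lie inside single
bands. A bag that is a balanced separator of the largest band meets it in at most `k p` vertices.
With `p ≈ √(n / k)` every vertex set of size `n` thus has a balanced separator of size at most
`3 √(k n)`. Recursing on the components and adding the separator to every bag gives a path
decomposition with bags of size `f(n) ≤ 3 √(k n) + f(n / 2)`, and `f(n) = 11 √(k n)` qualifies.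
-/

open Finset

namespace SimpleGraph

variable {V : Type} (G : SimpleGraph V)

def AdjIn (A : Finset V) (a b : V) : Prop := a ∈ A ∧ b ∈ A ∧ G.Adj a b

open Classical in
noncomputable def componentIn (A : Finset V) (v : V) : Finset V :=
  {w ∈ A | Relation.ReflTransGen (G.AdjIn A) v w}

def Separated (P Q : Finset V) : Prop := ∀ a ∈ P, ∀ b ∈ Q, ¬ G.Adj a b

variable {G} {A A' : Finset V} {v w : V}

instance (A : Finset V) : Std.Symm (G.AdjIn A) where
  symm _ _ h := ⟨h.2.1, h.1, h.2.2.symm⟩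

lemma mem_componentIn :
    w ∈ G.componentIn A v ↔ w ∈ A ∧ Relation.ReflTransGen (G.AdjIn A) v w := by
  classical simp [componentIn]

lemma componentIn_subset : G.componentIn A v ⊆ A := fun _ h => (mem_componentIn.1 h).1

lemma mem_componentIn_self (hv : v ∈ A) : v ∈ G.componentIn A v :=
  mem_componentIn.2 ⟨hv, .refl⟩

lemma componentIn_subset_of_closed {D : Set V} (hv : v ∈ D)
    (hD : ∀ ⦃a b⦄, a ∈ D → G.AdjIn A a b → b ∈ D) : ↑(G.componentIn A v) ⊆ D := by
  intro w hw
  induction (mem_componentIn.1 hw).2 with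
  | refl => exact hv
  | tail hvb hab ih => exact hD (ih (mem_componentIn.2 ⟨hab.1, hvb⟩)) hab

lemma componentIn_subset_componentIn (h : G.componentIn A v ⊆ A') :
    G.componentIn A v ⊆ G.componentIn A' v := by
  intro w hw
  refine mem_componentIn.2 ⟨h hw, ?_⟩
  induction (mem_componentIn.1 hw).2 with
  | refl => exact .refl
  | tail hvb hbc ih =>
    have hb := mem_componentIn.2 ⟨hbc.1, hvb⟩
    exact (ih hb).tail ⟨h hb, h hw, hbc.2.2⟩

lemma mem_componentIn_of_adj {a b : V} (ha : a ∈ G.componentIn A v) (hb : b ∈ A)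
    (hab : G.Adj a b) : b ∈ G.componentIn A v := by
  obtain ⟨haA, hva⟩ := mem_componentIn.1 ha
  exact mem_componentIn.2 ⟨hb, hva.tail ⟨haA, hb, hab⟩⟩

lemma componentIn_eq_of_mem (h : w ∈ G.componentIn A v) :
    G.componentIn A w = G.componentIn A v := by
  have hvw := (mem_componentIn.1 h).2
  ext z
  simp only [mem_componentIn, and_congr_right_iff]
  exact fun _ => ⟨hvw.trans, (Std.Symm.symm _ _ hvw).trans⟩

lemma separated_componentIn (h : G.componentIn A v ≠ G.componentIn A w) :
    G.Separated (G.componentIn A v) (G.componentIn A w) := fun _ ha _ hb hab =>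
  h <| (componentIn_eq_of_mem (mem_componentIn_of_adj ha (componentIn_subset hb) hab)).symm.trans
    (componentIn_eq_of_mem hb)

lemma biUnion_componentIn [DecidableEq V] (A : Finset V) :
    (A.image (G.componentIn A)).biUnion id = A := by
  ext v
  simp only [mem_biUnion, mem_image, id, exists_exists_and_eq_and]
  exact ⟨fun ⟨_, _, hv⟩ => componentIn_subset hv, fun hv => ⟨v, hv, mem_componentIn_self hv⟩⟩

end SimpleGraph

open SimpleGraph

section IntervalModel

variable {V : Type} {G : SimpleGraph V}

/-- A path decomposition of `G[U]` with bags of size at most `c`, recorded by the interval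
`lo v, …, hi v` of bags containing each vertex `v`. -/
def HasIntervalModel (G : SimpleGraph V) (U : Finset V) (c : ℕ) : Prop :=
  ∃ lo hi : V → ℕ, (∀ v ∈ U, lo v ≤ hi v) ∧ (∀ v ∈ U, ∀ w ∈ U, G.Adj v w → lo v ≤ hi w) ∧
    ∀ i, #{v ∈ U | lo v ≤ i ∧ i ≤ hi v} ≤ c

lemma hasIntervalModel_card (U : Finset V) : HasIntervalModel G U #U :=
  ⟨0, 0, by simp, by simp, fun _ => card_filter_le _ _⟩

lemma HasIntervalModel.mono {U : Finset V} {c c' : ℕ} (h : HasIntervalModel G U c)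
    (hc : c ≤ c') : HasIntervalModel G U c' :=
  let ⟨lo, hi, hle, hadj, hcard⟩ := h
  ⟨lo, hi, hle, hadj, fun i => (hcard i).trans hc⟩

/-- The intervals of `Q` are shifted past those of `P`. -/
lemma HasIntervalModel.union [DecidableEq V] {P Q : Finset V} {c : ℕ}
    (hP : HasIntervalModel G P c) (hQ : HasIntervalModel G Q c) (hPQ : G.Separated P Q) :
    HasIntervalModel G (P ∪ Q) c := by
  obtain ⟨lo, hi, hle, hadj, hcard⟩ := hP
  obtain ⟨lo', hi', hle', hadj', hcard'⟩ := hQ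
  set N := P.sup hi + 1
  have hN : ∀ v ∈ P, hi v < N := fun v hv => Nat.lt_succ_of_le (le_sup hv)
  refine ⟨fun v => if v ∈ P then lo v else lo' v + N, fun v => if v ∈ P then hi v else hi' v + N,
    ?_, ?_, fun i => ?_⟩
  · intro v hv
    by_cases hvP : v ∈ P
    · simpa [hvP] using hle v hvP
    · simpa [hvP] using hle' v ((mem_union.1 hv).resolve_left hvP)
  · intro v hv w hw hvw
    by_cases hvP : v ∈ P <;> by_cases hwP : w ∈ P
    · simpa [hvP, hwP] using hadj v hvP w hwP hvw
    · exact absurd hvw (hPQ v hvP w ((mem_union.1 hw).resolve_left hwP))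
    · exact absurd hvw.symm (hPQ w hwP v ((mem_union.1 hv).resolve_left hvP))
    · simpa [hvP, hwP] using
        hadj' v ((mem_union.1 hv).resolve_left hvP) w ((mem_union.1 hw).resolve_left hwP) hvw
  · rcases lt_or_ge i N with hi | hi
    · refine (card_le_card fun v hv => ?_).trans (hcard i)
      simp only [mem_filter, mem_union] at hv ⊢
      by_cases hvP : v ∈ P
      · simpa [hvP] using hv.2
      · simp only [hvP, if_false] at hv; omega
    · refine (card_le_card fun v hv => ?_).trans (hcard' (i - N))
      simp only [mem_filter, mem_union] at hv ⊢
      by_cases hvP : v ∈ P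
      · simp only [hvP, if_true] at hv; have := hN v hvP; omega
      · simp only [hvP, if_false, false_or] at hv; exact ⟨hv.1, by omega, by omega⟩

/-- The vertices of `S` get an interval covering all positions used for `U`. -/
lemma HasIntervalModel.union_add_card [DecidableEq V] {U : Finset V} {c : ℕ}
    (h : HasIntervalModel G U c) (S : Finset V) : HasIntervalModel G (U ∪ S) (c + #S) := by
  obtain ⟨lo, hi, hle, hadj, hcard⟩ := h
  set N := U.sup hi
  have hN : ∀ v ∈ U, hi v ≤ N := fun v hv => le_sup hv
  refine ⟨fun v => if v ∈ U then lo v else 0, fun v => if v ∈ U then hi v else N, ?_, ?_,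
    fun i => ?_⟩
  · intro v _
    by_cases hvU : v ∈ U
    · simpa [hvU] using hle v hvU
    · simp [hvU]
  · intro v _ w _ hvw
    by_cases hvU : v ∈ U <;> by_cases hwU : w ∈ U
    · simpa [hvU, hwU] using hadj v hvU w hwU hvw
    · simpa [hvU, hwU] using (hle v hvU).trans (hN v hvU)
    · simp [hvU]
    · simp [hvU, hwU]
  · refine (card_le_card fun v hv => ?_).trans
      ((card_union_le _ S).trans (Nat.add_le_add_right (hcard i) _))
    simp only [mem_filter, mem_union] at hv ⊢
    by_cases hvU : v ∈ U
    · simp only [hvU, if_true] at hv; exact .inl ⟨hvU, hv.2⟩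
    · exact .inr (hv.1.resolve_left hvU)

lemma HasIntervalModel.biUnion [DecidableEq V] {Ps : Finset (Finset V)} {c : ℕ}
    (hPs : (Ps : Set (Finset V)).Pairwise G.Separated) (h : ∀ P ∈ Ps, HasIntervalModel G P c) :
    HasIntervalModel G (Ps.biUnion id) c := by
  induction Ps using Finset.induction_on with
  | empty => exact ⟨0, 0, by simp, by simp, by simp⟩
  | insert P Ps hP ih =>
    rw [biUnion_insert]
    refine (h P (mem_insert_self _ _)).union
      (ih (hPs.mono (by simp)) fun Q hQ => h Q (mem_insert_of_mem hQ)) ?_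
    intro a ha b hb
    obtain ⟨Q, hQ, hbQ⟩ := mem_biUnion.1 hb
    exact hPs (mem_insert_self _ _) (mem_insert_of_mem hQ) (ne_of_mem_of_not_mem hQ hP).symm
      a ha b hbQ

lemma HasIntervalModel.of_componentIn {A : Finset V} {c : ℕ}
    (h : ∀ v ∈ A, HasIntervalModel G (G.componentIn A v) c) : HasIntervalModel G A c := by
  classical
  rw [← biUnion_componentIn (G := G) A]
  refine HasIntervalModel.biUnion (fun P hP Q hQ hPQ => ?_) fun P hP => ?_
  · obtain ⟨v, -, rfl⟩ := mem_image.1 hP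
    obtain ⟨w, -, rfl⟩ := mem_image.1 hQ
    exact separated_componentIn hPQ
  · obtain ⟨v, hv, rfl⟩ := mem_image.1 hP
    exact h v hv

lemma pathwidth_add_one_le_of_hasIntervalModel [Fintype V] [Nonempty V] {c : ℕ}
    (h : HasIntervalModel G univ c) : pathwidth G + 1 ≤ c := by
  obtain ⟨lo, hi, hle, hadj, hcard⟩ := h
  obtain ⟨v⟩ := ‹Nonempty V›
  have hc : 0 < c :=
    (card_pos.2 ⟨v, mem_filter.2 ⟨mem_univ v, le_rfl, hle v (mem_univ v)⟩⟩).trans_le (hcard (lo v))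
  suffices pathwidth G ≤ c - 1 by omega
  set N := univ.sup hi
  have hN : ∀ v, hi v < N + 1 := fun v => Nat.lt_succ_of_le (le_sup (mem_univ v))
  refine Nat.sInf_le ⟨N + 1, fun i => {v | lo v ≤ i ∧ (i : ℕ) ≤ hi v}, ?_, ?_, ?_,
    fun i => (hcard i).trans (by omega)⟩
  · intro v w hvw
    have hvw' := hadj v (mem_univ v) w (mem_univ w) hvw
    have hwv := hadj w (mem_univ w) v (mem_univ v) hvw.symm
    refine ⟨⟨max (lo v) (lo w), max_lt_iff.2 ⟨(hle v (mem_univ v)).trans_lt (hN v),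
      (hle w (mem_univ w)).trans_lt (hN w)⟩⟩, ?_, ?_⟩ <;>
      simp only [mem_filter, mem_univ, true_and]
    · exact ⟨le_max_left _ _, max_le (hle v (mem_univ v)) hwv⟩
    · exact ⟨le_max_right _ _, max_le hvw' (hle w (mem_univ w))⟩
  · exact fun v =>
      ⟨⟨lo v, (hle v (mem_univ v)).trans_lt (hN v)⟩, by simpa using hle v (mem_univ v)⟩
  · intro v x y z hxy hyz hx hz
    simp only [mem_filter, mem_univ, true_and, Fin.le_def] at hx hz hxy hyz ⊢
    omega

end IntervalModel

namespace SimpleGraph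

variable {ι : Type} {T : SimpleGraph ι}

lemma IsTree.not_reachable_deleteEdges (hT : T.IsTree) {x y : ι} (hxy : T.Adj x y) :
    ¬ (T.deleteEdges {s(x, y)}).Reachable x y :=
  isBridge_iff.1 (isAcyclic_iff_forall_adj_isBridge.1 hT.isAcyclic hxy)

lemma Connected.exists_adj_dist_lt (hT : T.Connected) {x z : ι} (hxz : x ≠ z) :
    ∃ y, T.Adj x y ∧ T.dist y z < T.dist x z ∧ (T.deleteEdges {s(x, y)}).Reachable y z := by
  classical
  obtain ⟨p, hp⟩ := (hT.preconnected x z).exists_walk_length_eq_dist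
  cases p with
  | nil => exact absurd rfl hxz
  | cons hxy q =>
    rw [Walk.length_cons] at hp
    refine ⟨_, hxy, (dist_le q).trans_lt (by omega), ⟨q.toDeleteEdges _ fun e he hes => ?_⟩⟩
    rw [Set.mem_singleton_iff] at hes
    subst hes
    have hx := q.fst_mem_support_of_mem_edges he
    have := dist_le (q.dropUntil x hx)
    have := q.length_dropUntil_le_length hx
    omega

end SimpleGraph

namespace IsTreeDecomp

variable {V ι : Type} {G : SimpleGraph V} {T : SimpleGraph ι} {B : ι → Finset V}

lemma reachable_deleteEdges_of_notMem (hD : IsTreeDecomp G T B) {v : V} {x z z' : ι} (y : ι)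
    (hvx : v ∉ B x) (hz : v ∈ B z) (hz' : v ∈ B z') :
    (T.deleteEdges {s(x, y)}).Reachable z z' := by
  let f : T.induce {t | v ∈ B t} →g T.deleteEdges {s(x, y)} :=
    ⟨Subtype.val, fun {a b} hab => deleteEdges_adj.2 ⟨hab, fun he => ?_⟩⟩
  · exact ((hD.2.2 v).preconnected ⟨z, hz⟩ ⟨z', hz'⟩).map f
  · rw [Set.mem_singleton_iff, Sym2.eq_iff] at he
    rcases he with ⟨rfl, -⟩ | ⟨-, rfl⟩
    exacts [hvx a.2, hvx b.2]

lemma mem_of_mem_of_reachable (hD : IsTreeDecomp G T B) {v : V} {x y z : ι} (hxy : T.Adj x y)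
    (hx : v ∈ B x) (hz : v ∈ B z) (hzy : (T.deleteEdges {s(x, y)}).Reachable z y) : v ∈ B y := by
  by_contra hy
  have hxz := hD.reachable_deleteEdges_of_notMem x hy hx hz
  rw [Sym2.eq_swap] at hxz
  exact hD.1.not_reachable_deleteEdges hxy (hxz.trans hzy)

variable [DecidableEq V] {W : Finset V} {x y z₀ : ι} {u : V}

/-- A component `C` of `W \ B x` is connected and avoids `B x`, so the bags meeting `C` all lie
on one side of each edge at `x`. -/
lemma reachable_of_mem_componentIn (hD : IsTreeDecomp G T B)
    {u₀ : V} (hu₀ : u₀ ∈ G.componentIn (W \ B x) u) (hz₀ : u₀ ∈ B z₀)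
    (hz₀y : (T.deleteEdges {s(x, y)}).Reachable z₀ y) :
    ∀ w ∈ G.componentIn (W \ B x) u, ∀ z, w ∈ B z → (T.deleteEdges {s(x, y)}).Reachable z y := by
  rw [← componentIn_eq_of_mem hu₀]
  refine fun w hw => componentIn_subset_of_closed
    (D := {w | ∀ z, w ∈ B z → (T.deleteEdges {s(x, y)}).Reachable z y}) ?_ ?_ hw
  · exact fun z hz => (hD.reachable_deleteEdges_of_notMem y
      (mem_sdiff.1 (componentIn_subset hu₀)).2 hz hz₀).trans hz₀y
  · rintro a b ha ⟨-, hb, hab⟩ z hz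
    obtain ⟨q, haq, hbq⟩ := hD.2.1 hab
    exact (hD.reachable_deleteEdges_of_notMem y (mem_sdiff.1 hb).2 hz hbq).trans (ha q haq)

/-- A vertex outside `C = G.componentIn (W \ B x) u` adjacent to `C` lies in `B x` and in a bag
on the side of `y`, hence in `B y`. -/
lemma componentIn_subset_of_reachable (hD : IsTreeDecomp G T B) (hxy : T.Adj x y)
    {u₀ : V} (hu₀ : u₀ ∈ G.componentIn (W \ B x) u) (hz₀ : u₀ ∈ B z₀)
    (hz₀y : (T.deleteEdges {s(x, y)}).Reachable z₀ y) {w : V}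
    (hw : w ∈ G.componentIn (W \ B x) u) :
    G.componentIn (W \ B y) w ⊆ G.componentIn (W \ B x) u := by
  refine fun c hc => componentIn_subset_of_closed (D := ↑(G.componentIn (W \ B x) u)) hw ?_ hc
  rintro a b ha ⟨-, hb, hab⟩
  obtain ⟨hbW, hby⟩ := mem_sdiff.1 hb
  by_cases hbx : b ∈ B x
  · obtain ⟨q, haq, hbq⟩ := hD.2.1 hab
    exact absurd (hD.mem_of_mem_of_reachable hxy hbx hbq
      (hD.reachable_of_mem_componentIn hu₀ hz₀ hz₀y a ha q haq)) hby
  · exact mem_componentIn_of_adj ha (mem_sdiff.2 ⟨hbW, hbx⟩) hab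

/-- If every `W \ B x` had a component `C x` with more than half of `W`, then moving from `x`
towards the bags meeting `C x` would make `C x` shrink, or stay equal and get closer. -/
lemma exists_card_lt_of_forall_big (hD : IsTreeDecomp G T B) (W : Finset V) {C : ι → Finset V}
    (hC : ∀ x, ∃ v, C x = G.componentIn (W \ B x) v) (hbig : ∀ x, #W < 2 * #(C x)) (n : ℕ)
    (x z : ι) (hz : (B z ∩ C x).Nonempty) (hxz : T.dist x z ≤ n) : ∃ y, #(C y) < #(C x) := by
  have hC' : ∀ x, ∀ c ∈ C x, C x = G.componentIn (W \ B x) c := fun x c hc => by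
    obtain ⟨v, hv⟩ := hC x
    rw [hv] at hc ⊢
    exact (componentIn_eq_of_mem hc).symm
  have hCsub : ∀ x, C x ⊆ W \ B x := fun x => by
    obtain ⟨v, hv⟩ := hC x
    exact hv ▸ componentIn_subset
  have hCB : ∀ x, Disjoint (B x) (C x) := fun x =>
    disjoint_left.2 fun _ hcx hc => (mem_sdiff.1 (hCsub x hc)).2 hcx
  have hCW : ∀ x, C x ⊆ W := fun x => (hCsub x).trans sdiff_subset
  obtain ⟨u₀, hu₀⟩ := hz
  rw [mem_inter] at hu₀
  induction n generalizing x with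
  | zero =>
    obtain rfl : x = z := (hD.1.connected.dist_eq_zero_iff).1 (by omega)
    exact absurd hu₀.2 (disjoint_left.1 (hCB x) hu₀.1)
  | succ n ih =>
    have hxz' : x ≠ z := by rintro rfl; exact disjoint_left.1 (hCB x) hu₀.1 hu₀.2
    obtain ⟨y, hxy, hyz, hzy⟩ := hD.1.connected.exists_adj_dist_lt hxz'
    obtain ⟨w, hw⟩ : (C y ∩ C x).Nonempty := inter_nonempty_of_card_lt_card_add_card (hCW y)
      (hCW x) (by have := hbig x; have := hbig y; omega)
    rw [mem_inter] at hw
    have hsub : C y ⊆ C x := by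
      have hu₀' := hu₀.2
      rw [hC' x u₀ hu₀.2] at hu₀' hw ⊢
      rw [hC' y w hw.1]
      exact hD.componentIn_subset_of_reachable hxy hu₀' hu₀.1 hzy.symm hw.2
    by_cases hy : (B y ∩ C x).Nonempty
    · obtain ⟨c, hc⟩ := hy
      rw [mem_inter] at hc
      exact ⟨y, card_lt_card ⟨hsub, fun h => disjoint_left.1 (hCB y) hc.1 (h hc.2)⟩⟩
    · have hsup : C x ⊆ C y := by
        rw [hC' y w hw.1, hC' x w hw.2]
        refine componentIn_subset_componentIn fun c hc => mem_sdiff.2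
          ⟨(mem_sdiff.1 (componentIn_subset hc)).1, fun hcy => hy ⟨c, mem_inter.2 ⟨hcy, ?_⟩⟩⟩
        rwa [← hC' x w hw.2] at hc
      have heq : C y = C x := hsub.antisymm hsup
      obtain ⟨y', hy'⟩ := ih y (by omega) (heq ▸ hu₀)
      exact ⟨y', heq ▸ hy'⟩

theorem exists_balanced_bag (hD : IsTreeDecomp G T B) (W : Finset V) :
    ∃ x, ∀ v, 2 * #(G.componentIn (W \ B x) v) ≤ #W := by
  by_contra! hbig
  choose u hu using hbig
  have : Nonempty ι := hD.1.connected.nonempty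
  set C := fun x => G.componentIn (W \ B x) (u x)
  set x := Function.argmin fun x => #(C x)
  obtain ⟨c, hc⟩ : (C x).Nonempty := card_pos.1 (by have := hu x; dsimp only [C]; omega)
  obtain ⟨⟨z, hz⟩⟩ := (hD.2.2 c).nonempty
  obtain ⟨y, hy⟩ := hD.exists_card_lt_of_forall_big W (C := C) (fun x => ⟨u x, rfl⟩) hu _ x z
    ⟨c, mem_inter.2 ⟨hz, hc⟩⟩ le_rfl
  exact hy.not_ge (Function.argmin_le (fun x => #(C x)) y)

end IsTreeDecomp

lemma exists_residue_card_le {V : Type} (L : V → ℕ) (U : Finset V) {p : ℕ} (hp : 0 < p) :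
    ∃ r < p, (#{v ∈ U | L v % p = r} : ℝ) ≤ #U / p := by
  obtain ⟨r, hr, h⟩ := exists_card_fiber_le_of_card_le_nsmul (s := U) (f := (L · % p))
    (nonempty_range_iff.2 hp.ne') (b := (#U / p : ℝ)) (by
      rw [card_range, nsmul_eq_mul, mul_div_cancel₀ _ (by positivity)])
  exact ⟨r, mem_range.1 hr, h⟩

section Layers

variable {V : Type} {L : V → ℕ} {p r k : ℕ}

/-- A layer `l ≡ r (mod p)` is the last one of its band `(l + (p - 1 - r)) / p`. -/
lemma succ_add_div_eq_of_mod_ne {l : ℕ} (hr : r < p) (hl : l % p ≠ r) :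
    (l + 1 + (p - 1 - r)) / p = (l + (p - 1 - r)) / p := by
  rw [show l + 1 + (p - 1 - r) = l + (p - 1 - r) + 1 by omega]
  refine Nat.succ_div_of_not_dvd fun hdvd => hl ?_
  have h : l + (p - r) ≡ r + (p - r) [MOD p] := by
    rw [Nat.add_sub_cancel' hr.le]
    rw [show l + (p - 1 - r) + 1 = l + (p - r) by omega] at hdvd
    exact (Nat.modEq_zero_iff_dvd.2 hdvd).trans (Nat.modEq_zero_iff_dvd.2 dvd_rfl).symm
  rw [Nat.ModEq.add_right_cancel' _ h, Nat.mod_eq_of_lt hr]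

lemma card_le_card_mul_of_forall_mem {F : Finset V} {I : Finset ℕ}
    (hF : ∀ i, #{v ∈ F | L v = i} ≤ k) (hI : ∀ v ∈ F, L v ∈ I) : #F ≤ #I * k := by
  rw [card_eq_sum_card_fiberwise hI]
  exact (sum_le_sum fun i _ => hF i).trans_eq (by rw [sum_const, smul_eq_mul])

lemma card_le_mul_of_div_eq {F : Finset V} {c j : ℕ} (hp : 0 < p)
    (hF : ∀ i, #{v ∈ F | L v = i} ≤ k) (hj : ∀ v ∈ F, (L v + c) / p = j) : #F ≤ p * k := by
  refine (card_le_card_mul_of_forall_mem (I := Ico (p * j - c) (p * j + p - c)) hF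
    fun v hv => ?_).trans (Nat.mul_le_mul_right k (by rw [Nat.card_Ico]; omega))
  have h := Nat.div_add_mod (L v + c) p
  rw [hj v hv] at h
  have := Nat.mod_lt (L v + c) hp
  rw [mem_Ico]
  omega

end Layers

lemma IsLayering.div_eq_of_adj {V : Type} {G : SimpleGraph V} {L : V → ℕ} {p r : ℕ}
    (hL : IsLayering G L) (hr : r < p) {a b : V} (ha : L a % p ≠ r) (hb : L b % p ≠ r)
    (hab : G.Adj a b) : (L a + (p - 1 - r)) / p = (L b + (p - 1 - r)) / p := by
  obtain ⟨hab₁, hab₂⟩ := hL hab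
  rcases lt_trichotomy (L a) (L b) with h | h | h
  · rw [show L b = L a + 1 by omega, succ_add_div_eq_of_mod_ne hr ha]
  · rw [h]
  · rw [show L a = L b + 1 by omega, succ_add_div_eq_of_mod_ne hr hb]

theorem exists_balanced_separator {V ι : Type} [DecidableEq V] {G : SimpleGraph V}
    {T : SimpleGraph ι} {B : ι → Finset V} {L : V → ℕ} {k p : ℕ} (hD : IsTreeDecomp G T B)
    (hL : IsLayering G L) (hk : ∀ x i, #{v ∈ B x | L v = i} ≤ k) (U : Finset V) (hp : 0 < p) :
    ∃ S ⊆ U, (#S : ℝ) ≤ #U / p + k * p ∧ ∀ v, 2 * #(G.componentIn (U \ S) v) ≤ #U := by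
  obtain ⟨r, hr, hS₀⟩ := exists_residue_card_le L U hp
  set band : V → ℕ := fun v => (L v + (p - 1 - r)) / p
  set W : ℕ → Finset V := fun j => {v ∈ U | L v % p ≠ r ∧ band v = j}
  have hWU : ∀ j, W j ⊆ U := fun j => filter_subset _ _
  obtain ⟨j, hj⟩ : ∃ j, ∀ j' ≠ j, 2 * #(W j') ≤ #U := by
    by_cases h : ∃ j, #U < 2 * #(W j)
    · obtain ⟨j, hj⟩ := h
      refine ⟨j, fun j' hj' => ?_⟩
      have hdisj : Disjoint (W j') (W j) := disjoint_filter.2 fun _ _ h h' => hj' (h.2 ▸ h'.2)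
      have := card_le_card (union_subset (hWU j') (hWU j))
      rw [card_union_of_disjoint hdisj] at this
      omega
    · simp only [not_exists, not_lt] at h
      exact ⟨0, fun j' _ => h j'⟩
  obtain ⟨x, hx⟩ := hD.exists_balanced_bag (W j)
  set S := {v ∈ U | L v % p = r} ∪ (B x ∩ W j)
  have hUS : ∀ w ∈ U \ S, w ∈ U ∧ L w % p ≠ r := fun w hw => by
    simp only [S, mem_sdiff, mem_union, mem_filter, not_or, not_and] at hw
    exact ⟨hw.1, hw.2.1 hw.1⟩
  have hband : ∀ v, G.componentIn (U \ S) v ⊆ W (band v) := fun v w hw => by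
    have hw' := hUS w (componentIn_subset hw)
    refine mem_filter.2 ⟨hw'.1, hw'.2, componentIn_subset_of_closed (D := {w | band w = band v})
      rfl (fun a b ha hab => ?_) hw⟩
    exact (hL.div_eq_of_adj hr (hUS b hab.2.1).2 (hUS a hab.1).2 hab.2.2.symm).trans ha
  refine ⟨S, union_subset (filter_subset _ _) (inter_subset_right.trans (hWU j)), ?_, fun v => ?_⟩
  · have hX : #(B x ∩ W j) ≤ p * k := card_le_mul_of_div_eq hp
      (fun i => (card_le_card (filter_subset_filter _ inter_subset_left)).trans (hk x i))
      fun v hv => (mem_filter.1 (mem_inter.1 hv).2).2.2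
    calc (#S : ℝ) ≤ #{v ∈ U | L v % p = r} + #(B x ∩ W j) := by
          exact_mod_cast card_union_le _ _
      _ ≤ #U / p + k * p := add_le_add hS₀ (by rw [mul_comm]; exact_mod_cast hX)
  · by_cases hv : band v = j
    · have hsub : G.componentIn (U \ S) v ⊆ G.componentIn (W j \ B x) v :=
        componentIn_subset_componentIn fun w hw => by
          have hwj := hv ▸ hband v hw
          refine mem_sdiff.2 ⟨hwj, fun hwx => ?_⟩
          exact (mem_sdiff.1 (componentIn_subset hw)).2
            (mem_union_right _ (mem_inter.2 ⟨hwx, hwj⟩))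
      have := card_le_card hsub
      have := card_le_card (hWU j)
      have := hx v
      omega
    · have := card_le_card (hband v)
      have := hj _ hv
      omega

/-- `p = ⌈u / √(k u)⌉` balances the two terms of the separator bound. -/
lemma exists_div_add_mul_le {k u : ℕ} (hk : 0 < k) (hku : k ≤ u) :
    ∃ p : ℕ, 0 < p ∧ (u : ℝ) / p + k * p ≤ 3 * √(k * u) := by
  set s := √((k : ℝ) * u)
  have hs : s ^ 2 = k * u := Real.sq_sqrt (by positivity)
  have hs0 : 0 < s := Real.sqrt_pos.2 (by have : 0 < u := hk.trans_le hku; positivity)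
  have hks : (k : ℝ) ≤ s := Real.le_sqrt_of_sq_le (by rw [sq]; gcongr)
  have hp : (u : ℝ) / s ≤ ⌈(u : ℝ) / s⌉₊ := Nat.le_ceil _
  have hp' : (⌈(u : ℝ) / s⌉₊ : ℝ) < u / s + 1 := Nat.ceil_lt_add_one (by positivity)
  have hp0 : (0 : ℝ) < ⌈(u : ℝ) / s⌉₊ :=
    lt_of_lt_of_le (div_pos (by exact_mod_cast hk.trans_le hku) hs0) hp
  refine ⟨⌈(u : ℝ) / s⌉₊, by exact_mod_cast hp0, ?_⟩
  have h₁ : (u : ℝ) / ⌈(u : ℝ) / s⌉₊ ≤ s := by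
    rw [div_le_iff₀ hp0]
    rwa [div_le_iff₀ hs0, mul_comm] at hp
  have h₂ : (k : ℝ) * ⌈(u : ℝ) / s⌉₊ ≤ s + k := by
    have : (k : ℝ) * (u / s) = s := by field_simp; exact hs.symm
    nlinarith
  linarith

/-- `f(u) = 11 √(k u)` satisfies `f(u) ≥ 3 √(k u) + f(u / 2)` because `11 / √2 ≤ 8`. -/
lemma floor_add_le_floor {k u m : ℕ} (hm : (m : ℝ) ≤ 3 * √(k * u)) :
    ⌊11 * √(k * (u / 2 : ℝ))⌋₊ + m ≤ ⌊11 * √((k : ℝ) * u)⌋₊ := by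
  refine Nat.le_floor ?_
  have h : 11 * √(k * (u / 2 : ℝ)) ≤ 8 * √((k : ℝ) * u) := by
    rw [← Real.sqrt_sq (by norm_num : (0 : ℝ) ≤ 11), ← Real.sqrt_mul (by norm_num),
      ← Real.sqrt_sq (by norm_num : (0 : ℝ) ≤ 8), ← Real.sqrt_mul (by norm_num)]
    exact Real.sqrt_le_sqrt (by nlinarith [(by positivity : (0 : ℝ) ≤ k * u)])
  push_cast
  linarith [Nat.floor_le (by positivity : 0 ≤ 11 * √(k * (u / 2 : ℝ)))]

theorem hasIntervalModel_of_layered {V ι : Type} {G : SimpleGraph V} {T : SimpleGraph ι}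
    {B : ι → Finset V} {L : V → ℕ} {k : ℕ} (hD : IsTreeDecomp G T B) (hL : IsLayering G L)
    (hk : ∀ x i, #{v ∈ B x | L v = i} ≤ k) (hk0 : 0 < k) (U : Finset V) :
    HasIntervalModel G U ⌊11 * √((k : ℝ) * #U)⌋₊ := by
  classical
  induction hU : #U using Nat.strong_induction_on generalizing U with
  | _ u ih =>
  by_cases hsmall : (u : ℝ) ≤ 11 * √((k : ℝ) * u)
  · exact (hasIntervalModel_card U).mono (Nat.le_floor (hU ▸ hsmall))
  have hku : k ≤ u := by
    by_contra! h
    refine hsmall ((Real.le_sqrt_of_sq_le ?_).trans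
      (le_mul_of_one_le_left (Real.sqrt_nonneg _) (by norm_num)))
    rw [sq]
    gcongr
  obtain ⟨p, hp, hpu⟩ := exists_div_add_mul_le hk0 hku
  obtain ⟨S, hSU, hS, hbal⟩ := exists_balanced_separator hD hL hk U hp
  have hcomp : ∀ v ∈ U \ S,
      HasIntervalModel G (G.componentIn (U \ S) v) ⌊11 * √(k * (u / 2 : ℝ))⌋₊ := fun v _ => by
    have h2 := hbal v
    refine (ih _ (by omega) _ rfl).mono (Nat.floor_mono ?_)
    gcongr
    rw [le_div_iff₀ two_pos]
    exact_mod_cast hU ▸ (mul_comm 2 _ ▸ h2)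
  have hmodel := (HasIntervalModel.of_componentIn hcomp).union_add_card S
  rw [sdiff_union_of_subset hSU] at hmodel
  exact hmodel.mono (floor_add_le_floor (hS.trans (hU ▸ hpu)))

lemma exists_layered_treeDecomp {V : Type} [Fintype V] (G : SimpleGraph V) :
    ∃ (ι : Type) (T : SimpleGraph ι) (B : ι → Finset V) (L : V → ℕ), IsTreeDecomp G T B ∧
      IsLayering G L ∧ ∀ x i, #{v ∈ B x | L v = i} ≤ layeredTreewidth G := by
  unfold layeredTreewidth
  refine Nat.sInf_mem (s := {k | ∃ (ι : Type) (T : SimpleGraph ι) (B : ι → Finset V)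
    (L : V → ℕ), IsTreeDecomp G T B ∧ IsLayering G L ∧ ∀ x i, #{v ∈ B x | L v = i} ≤ k})
    ⟨Fintype.card V, Unit, ⊥, fun _ => univ, fun _ => 0,
      ⟨.of_subsingleton, fun v w _ => ⟨(), mem_univ v, mem_univ w⟩, fun v => ?_⟩,
      fun _ _ _ => by simp, fun _ _ => card_filter_le _ _⟩
  have : Nonempty {x : Unit | v ∈ univ} := ⟨⟨(), mem_univ v⟩⟩
  exact .of_subsingleton

/-- Every `n`-vertex graph with layered treewidth `k` has pathwidth at most
`11√(kn) − 1`. -/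
theorem pathwidth_of_layeredTreewidth {V : Type} [Fintype V] [Nonempty V]
    (G : SimpleGraph V) (k : ℕ) (h : layeredTreewidth G = k) :
    (pathwidth G : ℝ) ≤ 11 * Real.sqrt (k * Fintype.card V) - 1 := by
  obtain ⟨ι, T, B, L, hD, hL, hk⟩ := exists_layered_treeDecomp G
  rw [h] at hk
  have hk0 : 0 < k := by
    obtain ⟨v⟩ := ‹Nonempty V›
    obtain ⟨⟨x, hx⟩⟩ := (hD.2.2 v).nonempty
    exact (card_pos.2 ⟨v, mem_filter.2 ⟨hx, rfl⟩⟩ : 0 < #{w ∈ B x | L w = L v}).trans_le (hk x _)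
  have hpw := pathwidth_add_one_le_of_hasIntervalModel
    (hasIntervalModel_of_layered hD hL hk hk0 univ)
  rw [card_univ] at hpw
  have hbound := (Nat.cast_le (α := ℝ).2 hpw).trans (Nat.floor_le (by positivity))
  push_cast at hbound
  linarith
end
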